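/- arXiv:2008.04937 — 9 statements merged into one kernel-verified Lean document; each statement's English description precedes it below -/
import Mathlib

section
/- There is a bijection between k-compositions of n defined via colored parts and k-compositions of n defined via internal zeros: a part c with color ℓ corresponds to the part c preceded by ℓ−1 zeros. In particular, the two sets have the same cardinality. -/
open Finset

/-- Colored-parts definition: a `k`-composition of `n` is a nonempty list of
(part, color) pairs with positive parts, colors in `{1,…,k}`, first color `1`,
and parts summing to `n`. -/
def ColoredComp (k n : ℕ) : Set (List (ℕ × ℕ)) :=
  {L | L ≠ [] ∧ (∀ p ∈ L, 1 ≤ p.1 ∧ 1 ≤ p.2 ∧ p.2 ≤ k) ∧ L.head!.2 = 1 ∧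
    (L.map Prod.fst).sum = n}

/-- Internal-zeros definition: a `k`-composition of `n` is a nonempty list of
nonnegative integers summing to `n`, whose first and last entries are positive,
with no run of `k` consecutive zeros. -/
def ZeroComp (k n : ℕ) : Set (List ℕ) :=
  {L | L ≠ [] ∧ 0 < L.head! ∧ 0 < L.getLast! ∧ L.sum = n ∧
    ¬ (List.replicate k 0 <:+: L)}

/-- The multinomial coefficient `binom(m, j)_r`: the coefficient of `x^j`
in `(1 + x + ⋯ + x^r)^m`. -/
noncomputable def mcoeff (r m j : ℕ) : ℕ :=
  (((∑ i ∈ Finset.range (r + 1), (Polynomial.X : Polynomial ℕ) ^ i)) ^ m).coeff j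

/-- The map sending a colored composition to its internal-zeros form:
a part `c` with color `m` becomes `m - 1` zeros followed by `c`. -/
def toZeros (L : List (ℕ × ℕ)) : List ℕ :=
  L.flatMap fun p => List.replicate (p.2 - 1) 0 ++ [p.1]

def fromZeros : List ℕ → List (ℕ × ℕ)
  | [] => []
  | 0 :: t =>
    match fromZeros t with
    | [] => []
    | (c, m) :: rest => (c, m + 1) :: rest
  | (c + 1) :: t => (c + 1, 1) :: fromZeros t

lemma toZeros_nil : toZeros [] = [] := rfl

lemma toZeros_cons (p : ℕ × ℕ) (t : List (ℕ × ℕ)) :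
    toZeros (p :: t) = List.replicate (p.2 - 1) 0 ++ p.1 :: toZeros t := by
  simp [toZeros, List.flatMap_cons]

lemma toZeros_ne_nil {L : List (ℕ × ℕ)} (h : L ≠ []) : toZeros L ≠ [] := by
  cases L with
  | nil => exact absurd rfl h
  | cons p t =>
    rw [toZeros_cons]
    intro hcontra
    rcases List.append_eq_nil_iff.mp hcontra with ⟨_, h2⟩
    exact List.cons_ne_nil _ _ h2

lemma toZeros_sum (L : List (ℕ × ℕ)) : (toZeros L).sum = (L.map Prod.fst).sum := by
  induction L with
  | nil => rfl
  | cons p t ih => simp [toZeros_cons, ih]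

/-- parsing a block -/
lemma fromZeros_block (j c : ℕ) (s : List ℕ) :
    fromZeros (List.replicate j 0 ++ (c + 1) :: s) = (c + 1, j + 1) :: fromZeros s := by
  induction j with
  | zero => simp [fromZeros]
  | succ j ih =>
    rw [List.replicate_succ, List.cons_append]
    show fromZeros (0 :: _) = _
    rw [fromZeros, ih]

lemma fromZeros_toZeros {L : List (ℕ × ℕ)} (h : ∀ p ∈ L, 1 ≤ p.1 ∧ 1 ≤ p.2) :
    fromZeros (toZeros L) = L := by
  induction L with
  | nil => rfl
  | cons p t ih =>
    obtain ⟨pc, pm⟩ := p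
    obtain ⟨hc, hm⟩ := h (pc, pm) (List.mem_cons_self)
    simp only at hc hm
    obtain ⟨c, rfl⟩ : ∃ c, pc = c + 1 := ⟨pc - 1, by omega⟩
    rw [toZeros_cons]
    simp only
    rw [fromZeros_block, ih (fun q hq => h q (List.mem_cons_of_mem _ hq))]
    congr 2
    omega

lemma fromZeros_mem (M : List ℕ) : ∀ p ∈ fromZeros M, 1 ≤ p.1 ∧ 1 ≤ p.2 := by
  induction M with
  | nil => simp [fromZeros]
  | cons a t ih =>
    intro p hp
    match a, hp with
    | 0, hp =>
      rw [fromZeros] at hp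
      revert hp
      match hfz : fromZeros t with
      | [] => intro hp; simp at hp
      | (c, m) :: rest =>
        intro hp
        rcases List.mem_cons.mp hp with h | h
        · subst h
          have hmem : (c, m) ∈ fromZeros t := by
            rw [hfz]; exact List.mem_cons_self
          have := ih (c, m) hmem
          exact ⟨this.1, Nat.le_succ_of_le this.2⟩
        · refine ih p ?_
          rw [hfz]; exact List.mem_cons_of_mem _ h
    | (c + 1), hp =>
      rw [fromZeros] at hp
      rcases List.mem_cons.mp hp with h | h
      · subst h; exact ⟨Nat.succ_le_succ (Nat.zero_le _), le_refl _⟩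
      · exact ih p h

lemma toZeros_fromZeros {M : List ℕ} (hne : M ≠ []) (hlast : 0 < M.getLast hne) :
    fromZeros M ≠ [] ∧ toZeros (fromZeros M) = M := by
  induction M with
  | nil => exact absurd rfl hne
  | cons a t ih =>
    by_cases ht : t = []
    · subst ht
      simp only [List.getLast_singleton] at hlast
      obtain ⟨c, rfl⟩ : ∃ c, a = c + 1 := ⟨a - 1, by omega⟩
      constructor
      · rw [fromZeros]; exact List.cons_ne_nil _ _
      · rw [fromZeros]; simp [toZeros_cons, toZeros_nil, fromZeros]
    · have hlast' : 0 < t.getLast ht := by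
        rwa [List.getLast_cons ht] at hlast
      obtain ⟨hne', heq⟩ := ih ht hlast'
      match a with
      | 0 =>
        match hfz : fromZeros t with
        | [] => exact absurd hfz hne'
        | (c, m) :: rest =>
          rw [hfz] at heq
          have hm : 1 ≤ m := (fromZeros_mem t (c, m) (by rw [hfz]; exact List.mem_cons_self)).2
          constructor
          · rw [fromZeros, hfz]; exact List.cons_ne_nil _ _
          · rw [fromZeros, hfz]
            rw [toZeros_cons] at heq ⊢
            simp only
            have : m + 1 - 1 = (m - 1) + 1 := by omega
            rw [this, List.replicate_succ, List.cons_append, heq]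
      | (c + 1) =>
        constructor
        · rw [fromZeros]; exact List.cons_ne_nil _ _
        · rw [fromZeros, toZeros_cons]
          simp [heq]

lemma fromZeros_sum {M : List ℕ} (hne : M ≠ []) (hlast : 0 < M.getLast hne) :
    ((fromZeros M).map Prod.fst).sum = M.sum := by
  rw [← toZeros_sum, (toZeros_fromZeros hne hlast).2]

/-- member blocks give infix zeros runs -/
lemma replicate_infix_of_mem {L : List (ℕ × ℕ)} {p : ℕ × ℕ} (hp : p ∈ L) :
    List.replicate (p.2 - 1) 0 <:+: toZeros L := by
  obtain ⟨s, t, rfl⟩ := List.append_of_mem hp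
  refine ⟨toZeros s, p.1 :: toZeros t, ?_⟩
  show toZeros s ++ _ ++ _ = _
  have : toZeros (s ++ p :: t) = toZeros s ++ toZeros (p :: t) := List.flatMap_append ..
  rw [this, toZeros_cons, List.append_assoc]

/-- splitting lemma for zero runs across a positive entry -/
lemma replicate_infix_split {j c : ℕ} (hj : 1 ≤ j) (hc : 0 < c) {s t : List ℕ}
    (h : List.replicate j 0 <:+: s ++ c :: t) :
    List.replicate j 0 <:+: s ∨ List.replicate j 0 <:+: t := by
  obtain ⟨u, v, huv⟩ := h
  rw [List.append_assoc] at huv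
  rcases List.append_eq_append_iff.mp huv with ⟨a', ha1, ha2⟩ | ⟨c', hc1, hc2⟩
  · -- ha1 : s = u ++ a', ha2 : replicate j 0 ++ v = a' ++ (c :: t)
    rcases List.append_eq_append_iff.mp ha2 with ⟨w, hw1, hw2⟩ | ⟨w, hw1, hw2⟩
    · -- hw1 : a' = replicate j 0 ++ w
      left
      exact ⟨u, w, by rw [ha1, hw1, List.append_assoc]⟩
    · -- hw1 : replicate j 0 = a' ++ w, hw2 : c :: t = w ++ v
      match w, hw1, hw2 with
      | [], hw1, hw2 =>
        left
        simp only [List.append_nil] at hw1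
        exact ⟨u, [], by rw [ha1, ← hw1]; simp⟩
      | x :: w', hw1, hw2 =>
        exfalso
        have hx : x = 0 := List.eq_of_mem_replicate
          (by rw [hw1]; exact List.mem_append_right _ (List.mem_cons_self))
        rw [List.cons_append] at hw2
        have := (List.cons_eq_cons.mp hw2).1
        omega
  · -- hc1 : u = s ++ c', hc2 : c :: t = c' ++ (replicate j 0 ++ v)
    match c', hc2 with
    | [], hc2 =>
      exfalso
      rw [List.nil_append, show j = (j - 1) + 1 by omega, List.replicate_succ,
        List.cons_append] at hc2
      have := (List.cons_eq_cons.mp hc2).1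
      omega
    | x :: c'', hc2 =>
      right
      rw [List.cons_append] at hc2
      exact ⟨c'', v, by rw [List.append_assoc]; exact ((List.cons_eq_cons.mp hc2).2).symm⟩

lemma toZeros_no_run {k : ℕ} (hk : 1 ≤ k) {L : List (ℕ × ℕ)}
    (h : ∀ p ∈ L, 1 ≤ p.1 ∧ p.2 ≤ k) : ¬ (List.replicate k 0 <:+: toZeros L) := by
  induction L with
  | nil =>
    intro hcontra
    rw [toZeros_nil] at hcontra
    have := hcontra.length_le
    simp at this
    omega
  | cons p t ih =>
    intro hcontra
    rw [toZeros_cons] at hcontra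
    obtain ⟨hc, hm⟩ := h p (List.mem_cons_self)
    rcases replicate_infix_split hk hc hcontra with h1 | h1
    · have := h1.length_le
      simp at this
      omega
    · exact ih (fun q hq => h q (List.mem_cons_of_mem _ hq)) h1

lemma toZeros_getLast {L : List (ℕ × ℕ)} (hne : L ≠ []) (h : ∀ p ∈ L, 1 ≤ p.1) :
    ∃ s x, toZeros L = s ++ [x] ∧ 0 < x := by
  induction L with
  | nil => exact absurd rfl hne
  | cons p t ih =>
    by_cases ht : t = []
    · subst ht
      exact ⟨List.replicate (p.2 - 1) 0, p.1, by simp [toZeros_cons, toZeros_nil],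
        h p (List.mem_cons_self)⟩
    · obtain ⟨s, x, hs, hx⟩ := ih ht (fun q hq => h q (List.mem_cons_of_mem _ hq))
      exact ⟨List.replicate (p.2 - 1) 0 ++ p.1 :: s, x, by
        rw [toZeros_cons, hs]; simp, hx⟩

lemma mapsTo (k n : ℕ) (hk : 1 ≤ k) :
    Set.MapsTo toZeros (ColoredComp k n) (ZeroComp k n) := by
  intro L hL
  obtain ⟨hne, hall, hhead, hsum⟩ := hL
  refine ⟨toZeros_ne_nil hne, ?_, ?_, by rw [toZeros_sum]; exact hsum,
    toZeros_no_run hk (fun p hp => ⟨(hall p hp).1, (hall p hp).2.2⟩)⟩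
  · -- head positive
    match L, hne with
    | p :: t, _ =>
      have hp1 : p.2 = 1 := by simpa using hhead
      rw [toZeros_cons, hp1]
      simp only [Nat.sub_self, List.replicate_zero, List.nil_append, List.head!_cons]
      exact (hall p (List.mem_cons_self)).1
  · -- last positive
    obtain ⟨s, x, hs, hx⟩ := toZeros_getLast hne (fun p hp => (hall p hp).1)
    rw [hs]
    rwa [List.getLast!_of_getLast? (List.getLast?_concat)]

lemma surjOn (k n : ℕ) (hk : 1 ≤ k) :
    Set.SurjOn toZeros (ColoredComp k n) (ZeroComp k n) := by
  intro M hM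
  obtain ⟨hne, hhead, hlast, hsum, hrun⟩ := hM
  have hlast' : 0 < M.getLast hne := by
    rwa [← List.getLast!_of_getLast? (List.getLast?_eq_getLast hne)]
  obtain ⟨hfne, hfeq⟩ := toZeros_fromZeros hne hlast'
  refine ⟨fromZeros M, ⟨hfne, ?_, ?_, ?_⟩, hfeq⟩
  · intro p hp
    refine ⟨(fromZeros_mem M p hp).1, (fromZeros_mem M p hp).2, ?_⟩
    -- color bound
    by_contra hcon
    push_neg at hcon
    apply hrun
    have h1 : List.replicate (p.2 - 1) 0 <:+: M := by
      rw [← hfeq]; exact replicate_infix_of_mem hp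
    exact List.IsInfix.trans (by
      refine ⟨[], List.replicate (p.2 - 1 - k) 0, ?_⟩
      rw [List.nil_append, ← List.replicate_add]
      congr 1
      omega) h1
  · -- head color 1
    match M, hne, hhead with
    | a :: t, _, hhead =>
      simp only [List.head!_cons] at hhead
      obtain ⟨c, rfl⟩ : ∃ c, a = c + 1 := ⟨a - 1, by omega⟩
      rw [fromZeros]
      simp
  · rw [fromZeros_sum hne hlast']; exact hsum

lemma injOn (k n : ℕ) : Set.InjOn toZeros (ColoredComp k n) := by
  intro L1 h1 L2 h2 heq
  have e1 := fromZeros_toZeros (L := L1) (fun p hp => ⟨(h1.2.1 p hp).1, (h1.2.1 p hp).2.1⟩)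
  have e2 := fromZeros_toZeros (L := L2) (fun p hp => ⟨(h2.2.1 p hp).1, (h2.2.1 p hp).2.1⟩)
  rw [← e1, ← e2, heq]

theorem stmt1 (k n : ℕ) (hk : 1 ≤ k) (hn : 1 ≤ n) :
    Set.BijOn toZeros (ColoredComp k n) (ZeroComp k n) ∧
    Nat.card {L : List (ℕ × ℕ) // L ∈ ColoredComp k n} =
      Nat.card {L : List ℕ // L ∈ ZeroComp k n} := by
  have hbij : Set.BijOn toZeros (ColoredComp k n) (ZeroComp k n) :=
    ⟨mapsTo k n hk, injOn k n, surjOn k n hk⟩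
  exact ⟨hbij, Nat.card_congr (hbij.equiv toZeros)⟩
end

section
/- The number c^k(n,ℓ) of k-compositions of n (internal zeros definition) with exactly ℓ total parts (counting zeros) satisfies the recurrence c^k(n,ℓ) = c^k(n−1,ℓ−k) + c^k(n−1,ℓ−k+1) + ... + c^k(n−1,ℓ−1) + c^k(n−1,ℓ) for n ≥ 2. -/
open Finset

section Helpers
open List

-- helper: getLast! of append
lemma getLast!_append' {A R : List ℕ} (h : R ≠ []) : (A ++ R).getLast! = R.getLast! := by
  obtain ⟨r, hr⟩ := Option.isSome_iff_exists.1 (List.getLast?_isSome.2 h)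
  rw [List.getLast!_of_getLast? hr, List.getLast!_of_getLast? (l := A ++ R) (by
    rw [List.getLast?_append, hr]; rfl)]

-- zero run in cons
lemma zrun_cons {k a : ℕ} (hk : 1 ≤ k) (ha : a ≠ 0) (T : List ℕ) :
    (List.replicate k 0 <:+: a :: T) ↔ (List.replicate k 0 <:+: T) := by
  constructor
  · rintro ⟨s, t, hst⟩
    cases s with
    | nil =>
      exfalso
      obtain ⟨k, rfl⟩ := Nat.exists_eq_add_of_le hk
      rw [Nat.add_comm] at hst
      simp [List.replicate_succ, List.cons_append] at hst
      exact ha hst.1.symm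
    | cons b s' =>
      refine ⟨s', t, ?_⟩
      simpa using congrArg List.tail hst
  · intro h
    exact h.trans (List.suffix_cons a T).isInfix

lemma zrun_pad {k t : ℕ} (ht : t < k) {M : List ℕ} (hh : M.head! ≠ 0) :
    (List.replicate k 0 <:+: List.replicate t 0 ++ M) ↔ (List.replicate k 0 <:+: M) := by
  constructor
  · rintro ⟨s, u, h⟩
    by_cases hs : s.length ≤ t
    · exfalso
      obtain ⟨d, hd⟩ : ∃ d, t = s.length + d := ⟨t - s.length, by omega⟩
      have hd2 : d < k := by omega
      obtain ⟨c, hc⟩ : ∃ c, k = d + (c + 1) := ⟨k - d - 1, by omega⟩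
      -- rewrite RHS : replicate t 0 ++ M = replicate s.length 0 ++ (replicate d 0 ++ M)
      rw [hd, ← List.replicate_append_replicate, List.append_assoc] at h
      -- take s.length: s = replicate s.length 0
      have hs' : s = List.replicate s.length 0 := by
        have := congrArg (List.take s.length) h
        rwa [List.append_assoc, List.take_left, List.take_left' (by simp)] at this
      rw [hs'] at h
      simp only [List.length_replicate] at h
      rw [List.append_assoc] at h
      replace h := List.append_cancel_left h
      rw [hc, ← List.replicate_append_replicate, List.append_assoc] at h
      replace h := List.append_cancel_left h
      rw [List.replicate_succ] at h
      rw [← h] at hh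
      simp at hh
    · -- s.length > t: take t of both sides gives take t s = replicate t 0
      have hts : t ≤ s.length := le_of_not_ge hs
      have h1 : List.take t s = List.replicate t 0 := by
        have := congrArg (List.take t) h
        rwa [List.append_assoc, List.take_append_of_le_length hts,
          List.take_left' (by simp)] at this
      have h2 : s = List.replicate t 0 ++ s.drop t := by
        rw [← h1, List.take_append_drop]
      rw [h2, List.append_assoc, List.append_assoc] at h
      replace h := List.append_cancel_left h
      exact ⟨s.drop t, u, by rw [List.append_assoc]; exact h⟩
  · intro h
    exact h.trans (List.suffix_append _ M).isInfix

lemma takeWhile_zeros_append {t : ℕ} {M : List ℕ} (hh : M.head! ≠ 0) (hM : M ≠ []) :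
    (List.replicate t 0 ++ M).takeWhile (· == 0) = List.replicate t 0 ∧
    (List.replicate t 0 ++ M).dropWhile (· == 0) = M := by
  induction t with
  | zero =>
    obtain ⟨m, R, rfl⟩ := List.exists_cons_of_ne_nil hM
    simp only [List.head!_cons] at hh
    simp [List.takeWhile_cons, List.dropWhile_cons, hh]
  | succ t ih =>
    rw [List.replicate_succ]
    simpa [List.takeWhile_cons, List.dropWhile_cons] using ih

lemma list_finite_aux (m c : ℕ) :
    {l : List ℕ | l.length = m ∧ ∀ x ∈ l, x < c}.Finite := by
  induction m with
  | zero =>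
    apply Set.Finite.subset (Set.finite_singleton ([] : List ℕ))
    rintro l ⟨hl, -⟩
    simp [List.eq_nil_of_length_eq_zero hl]
  | succ m ih =>
    apply Set.Finite.subset (((Set.finite_Iio c).prod ih).image fun p => p.1 :: p.2)
    rintro l ⟨hlen, hmem⟩
    cases l with
    | nil => simp at hlen
    | cons a T =>
      exact ⟨(a, T), ⟨hmem a (by simp), by simp at hlen; exact hlen,
        fun x hx => hmem x (by simp [hx])⟩, rfl⟩

lemma finite_pred {P : List ℕ → Prop} {m c : ℕ}
    (h : ∀ L, P L → L.length = m ∧ ∀ x ∈ L, x < c) : Finite {L : List ℕ // P L} := by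
  have : {L | P L} ⊆ {l : List ℕ | l.length = m ∧ ∀ x ∈ l, x < c} := fun L hL => h L hL
  exact ((list_finite_aux m c).subset this).to_subtype

def fwd (L : List ℕ) : ℕ × List ℕ :=
  match L with
  | [] => (0, [])
  | a :: T =>
    if a = 1 then ((T.takeWhile (· == 0)).length + 1, T.dropWhile (· == 0))
    else (0, (a - 1) :: T)

def bwd (j : ℕ) (M : List ℕ) : List ℕ :=
  if j = 0 then (match M with | [] => [] | m :: R => (m + 1) :: R)
  else 1 :: (List.replicate (j - 1) 0 ++ M)

lemma fwd_mem {k n ℓ : ℕ} (hk : 1 ≤ k) (hn : 2 ≤ n) {L : List ℕ}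
    (hL : L ∈ ZeroComp k n) (hlen : L.length = ℓ) :
    (fwd L).1 < k + 1 ∧ (fwd L).2 ∈ ZeroComp k (n - 1) ∧ (fwd L).2.length + (fwd L).1 = ℓ := by
  obtain ⟨hne, hhead, hlast, hsum, hrun⟩ := hL
  obtain ⟨a, T, rfl⟩ := List.exists_cons_of_ne_nil hne
  simp only [List.head!_cons] at hhead
  simp only [List.sum_cons] at hsum
  simp only [List.length_cons] at hlen
  by_cases ha : a = 1
  · subst ha
    set tw := T.takeWhile (· == 0) with htw
    set dw := T.dropWhile (· == 0) with hdw
    have hfwd : fwd (1 :: T) = (tw.length + 1, dw) := rfl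
    have hT : tw ++ dw = T := by
      rw [htw, hdw]; exact List.takeWhile_append_dropWhile
    have htwrep : tw = List.replicate tw.length 0 := by
      apply List.eq_replicate_of_mem
      intro b hb
      exact eq_of_beq (List.mem_takeWhile_imp (p := (· == 0)) (htw ▸ hb))
    have hsumT : T.sum = n - 1 := by omega
    have hsumdw : dw.sum = n - 1 := by
      have e1 : tw.sum + dw.sum = T.sum := by rw [← List.sum_append, hT]
      have e2 : tw.sum = 0 := by rw [htwrep]; simp
      omega
    have hdwne : dw ≠ [] := by
      intro h; rw [h] at hsumdw; simp at hsumdw; omega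
    obtain ⟨m, R, hmR⟩ := List.exists_cons_of_ne_nil hdwne
    have w : T.dropWhile (· == 0) ≠ [] := by rw [← hdw]; exact hdwne
    have hmne : m ≠ 0 := by
      have h1 := List.head_dropWhile_not (· == 0) (l := T) w
      have h2 : (T.dropWhile (· == 0)).head w = m := by
        have h3 : (T.dropWhile (· == 0)).head? = some m := by rw [← hdw, hmR]; rfl
        rw [List.head?_eq_head w] at h3
        exact Option.some.inj h3
      rw [h2] at h1
      simpa using h1
    have hdwh : dw.head! ≠ 0 := by rw [hmR]; simpa using hmne
    have htlt : tw.length < k := by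
      by_contra hc
      push_neg at hc
      apply hrun
      have h1 : List.replicate k 0 <+: tw := by
        rw [htwrep]
        exact ⟨List.replicate (tw.length - k) 0, by simp; omega⟩
      exact (h1.trans (List.takeWhile_prefix _)).isInfix.trans
        (List.suffix_cons 1 T).isInfix
    have hlen' : tw.length + dw.length = T.length := by
      rw [← List.length_append, hT]
    rw [hfwd]
    refine ⟨by simp; omega, ⟨hdwne, ?_, ?_, hsumdw, ?_⟩, by simp; omega⟩
    · rw [hmR]; simpa using Nat.pos_of_ne_zero hmne
    · have e : (1 :: T).getLast! = dw.getLast! := by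
        have e2 : (1 :: T) = (1 :: tw) ++ dw := by simp [hT]
        rw [e2, getLast!_append' hdwne]
      rw [← e]; exact hlast
    · intro h
      exact hrun (h.trans ((hdw ▸ List.dropWhile_suffix (l := T) (· == 0)).isInfix.trans
        (List.suffix_cons 1 T).isInfix))
  · have ha2 : 2 ≤ a := by omega
    have hfwd : fwd (a :: T) = (0, (a - 1) :: T) := by simp [fwd, ha]
    have hrunT : ¬ (List.replicate k 0 <:+: T) := fun h =>
      hrun (h.trans (List.suffix_cons a T).isInfix)
    rw [hfwd]
    refine ⟨by omega, ⟨by simp, by simp; omega, ?_, by simp; omega, ?_⟩, by simp; omega⟩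
    · cases T with
      | nil => simp [List.getLast!_cons_eq_getLastD]; omega
      | cons b R =>
        have h1 : ((a - 1) :: b :: R).getLast! = (b :: R).getLast! :=
          getLast!_append' (A := [a-1]) (by simp)
        have h2 : (a :: b :: R).getLast! = (b :: R).getLast! :=
          getLast!_append' (A := [a]) (by simp)
        rw [h1, ← h2]; exact hlast
    · rw [zrun_cons hk (by omega)]
      exact hrunT

lemma bwd_mem {k n : ℕ} (hk : 1 ≤ k) (hn : 2 ≤ n) {j : ℕ} (hj : j < k + 1)
    {M : List ℕ} (hM : M ∈ ZeroComp k (n - 1)) :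
    bwd j M ∈ ZeroComp k n ∧ (bwd j M).length = M.length + j := by
  obtain ⟨hne, hhead, hlast, hsum, hrun⟩ := hM
  obtain ⟨m, R, rfl⟩ := List.exists_cons_of_ne_nil hne
  simp only [List.head!_cons] at hhead
  simp only [List.sum_cons] at hsum
  by_cases hj0 : j = 0
  · subst hj0
    have hb : bwd 0 (m :: R) = (m + 1) :: R := rfl
    rw [hb]
    refine ⟨⟨by simp, by simp, ?_, by simp; omega, ?_⟩, by simp⟩
    · cases R with
      | nil => simp [List.getLast!_cons_eq_getLastD]
      | cons b S =>
        have h1 : ((m + 1) :: b :: S).getLast! = (b :: S).getLast! :=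
          getLast!_append' (A := [m+1]) (by simp)
        have h2 : ((m) :: b :: S).getLast! = (b :: S).getLast! :=
          getLast!_append' (A := [m]) (by simp)
        rw [h1, ← h2]; exact hlast
    · rw [zrun_cons hk (by omega), ← zrun_cons hk (a := m) (by omega)]
      exact hrun
  · have hb : bwd j (m :: R) = 1 :: (List.replicate (j - 1) 0 ++ (m :: R)) := by
      simp [bwd, hj0]
    rw [hb]
    refine ⟨⟨by simp, by simp, ?_, ?_, ?_⟩, by simp; omega⟩
    · have h1 : (1 :: (List.replicate (j - 1) 0 ++ (m :: R))).getLast!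
          = (m :: R).getLast! := by
        have e : (1 :: (List.replicate (j - 1) 0 ++ (m :: R)))
            = (1 :: List.replicate (j - 1) 0) ++ (m :: R) := by simp
        rw [e, getLast!_append' (by simp)]
      rw [h1]; exact hlast
    · simp; omega
    · rw [zrun_cons hk (by omega), zrun_pad (by omega) (by simpa using hhead.ne')]
      exact hrun

lemma bwd_fwd {k n : ℕ} (hn : 2 ≤ n) {L : List ℕ} (hL : L ∈ ZeroComp k n) :
    bwd (fwd L).1 (fwd L).2 = L := by
  obtain ⟨hne, hhead, hlast, hsum, hrun⟩ := hL
  obtain ⟨a, T, rfl⟩ := List.exists_cons_of_ne_nil hne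
  simp only [List.head!_cons] at hhead
  simp only [List.sum_cons] at hsum
  by_cases ha : a = 1
  · subst ha
    have hfwd : fwd (1 :: T) = ((T.takeWhile (· == 0)).length + 1, T.dropWhile (· == 0)) := rfl
    rw [hfwd]
    have htwrep : T.takeWhile (· == 0) = List.replicate (T.takeWhile (· == 0)).length 0 := by
      apply List.eq_replicate_of_mem
      intro b hb
      exact eq_of_beq (List.mem_takeWhile_imp (p := (· == 0)) hb)
    simp only [bwd, Nat.add_sub_cancel, if_neg (Nat.succ_ne_zero _)]
    rw [← htwrep, List.takeWhile_append_dropWhile]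
  · have hfwd : fwd (a :: T) = (0, (a - 1) :: T) := by simp [fwd, ha]
    rw [hfwd]
    have hb0 : bwd 0 ((a - 1) :: T) = (a - 1 + 1) :: T := rfl
    have : a - 1 + 1 = a := by omega
    rw [hb0, this]

lemma fwd_bwd {k n : ℕ} (hn : 2 ≤ n) {j : ℕ} {M : List ℕ} (hM : M ∈ ZeroComp k (n - 1)) :
    fwd (bwd j M) = (j, M) := by
  obtain ⟨hne, hhead, hlast, hsum, hrun⟩ := hM
  obtain ⟨m, R, rfl⟩ := List.exists_cons_of_ne_nil hne
  simp only [List.head!_cons] at hhead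
  by_cases hj0 : j = 0
  · subst hj0
    have hb : bwd 0 (m :: R) = (m + 1) :: R := rfl
    rw [hb]
    have : m + 1 ≠ 1 := by omega
    simp [fwd, this]; omega
  · have hb : bwd j (m :: R) = 1 :: (List.replicate (j - 1) 0 ++ (m :: R)) := by
      simp [bwd, hj0]
    rw [hb]
    obtain ⟨htw, hdw⟩ := takeWhile_zeros_append (t := j - 1) (M := m :: R)
      (by simpa using hhead.ne') (by simp)
    have hfwd : fwd (1 :: (List.replicate (j - 1) 0 ++ (m :: R)))
        = (((List.replicate (j - 1) 0 ++ (m :: R)).takeWhile (· == 0)).length + 1,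
           (List.replicate (j - 1) 0 ++ (m :: R)).dropWhile (· == 0)) := rfl
    rw [hfwd, htw, hdw]
    simp
    omega

lemma sigma_subtype_ext {N : ℕ} {Q : List ℕ → ℕ → Prop}
    {x y : Σ j : Fin N, {M : List ℕ // Q M j.1}}
    (h1 : x.1.1 = y.1.1) (h2 : x.2.1 = y.2.1) : x = y := by
  obtain ⟨⟨a, ha⟩, ⟨M, hM⟩⟩ := x
  obtain ⟨⟨b, hb⟩, ⟨M', hM'⟩⟩ := y
  dsimp at h1 h2
  subst h1
  subst h2
  rfl

end Helpers

/-- The number of `k`-compositions of `n` (internal zeros definition) with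
exactly `ℓ` parts in total (zeros included). -/
noncomputable def czk (k n ℓ : ℕ) : ℕ :=
  Nat.card {L : List ℕ // L ∈ ZeroComp k n ∧ L.length = ℓ}

theorem stmt3 (k n ℓ : ℕ) (hk : 1 ≤ k) (hn : 2 ≤ n) :
    czk k n ℓ = ∑ j ∈ Finset.range (k + 1),
      if j ≤ ℓ then czk k (n - 1) (ℓ - j) else 0 := by
  classical
  haveI F1 : ∀ j : ℕ, Finite {M : List ℕ // M ∈ ZeroComp k (n - 1) ∧ M.length + j = ℓ} := by
    intro j
    apply finite_pred (m := ℓ - j) (c := n)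
    rintro M ⟨⟨hne, hh, hl, hsum, hr⟩, hlen⟩
    refine ⟨by omega, fun x hx => ?_⟩
    have : x ≤ M.sum := List.single_le_sum (fun _ _ => Nat.zero_le _) x hx
    omega
  let E : {L : List ℕ // L ∈ ZeroComp k n ∧ L.length = ℓ} ≃
      Σ j : Fin (k + 1), {M : List ℕ // M ∈ ZeroComp k (n - 1) ∧ M.length + j.1 = ℓ} :=
    { toFun := fun x =>
        ⟨⟨(fwd x.1).1, (fwd_mem hk hn x.2.1 x.2.2).1⟩,
         ⟨(fwd x.1).2, (fwd_mem hk hn x.2.1 x.2.2).2.1, (fwd_mem hk hn x.2.1 x.2.2).2.2⟩⟩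
      invFun := fun y =>
        ⟨bwd y.1.1 y.2.1, (bwd_mem hk hn y.1.2 y.2.2.1).1, by
          rw [(bwd_mem hk hn y.1.2 y.2.2.1).2]; exact y.2.2.2⟩
      left_inv := fun x => Subtype.ext (bwd_fwd hn x.2.1)
      right_inv := fun y => by
        have hfb := fwd_bwd (k := k) hn (j := y.1.1) y.2.2.1
        refine sigma_subtype_ext (Q := fun M j => M ∈ ZeroComp k (n - 1) ∧ M.length + j = ℓ) ?_ ?_
        · show (fwd (bwd y.1.1 y.2.1)).1 = y.1.1
          rw [hfb]
        · show (fwd (bwd y.1.1 y.2.1)).2 = y.2.1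
          rw [hfb] }
  haveI inst1 : ∀ j : Fin (k + 1),
      Finite {M : List ℕ // M ∈ ZeroComp k (n - 1) ∧ M.length + j.1 = ℓ} := fun j => F1 j.1
  haveI inst2 : ∀ j : Fin (k + 1),
      Fintype {M : List ℕ // M ∈ ZeroComp k (n - 1) ∧ M.length + j.1 = ℓ} :=
    fun j => Fintype.ofFinite _
  have hcard : czk k n ℓ
      = ∑ j : Fin (k + 1),
          Nat.card {M : List ℕ // M ∈ ZeroComp k (n - 1) ∧ M.length + j.1 = ℓ} := by
    rw [czk, Nat.card_congr E, Nat.card_eq_fintype_card, Fintype.card_sigma]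
    exact Finset.sum_congr rfl fun j _ => (Nat.card_eq_fintype_card).symm
  rw [hcard, ← Fin.sum_univ_eq_sum_range
    (fun j => if j ≤ ℓ then czk k (n - 1) (ℓ - j) else 0) (k + 1)]
  apply Finset.sum_congr rfl
  intro j _
  by_cases hjl : j.1 ≤ ℓ
  · rw [if_pos hjl, czk]
    refine Nat.card_congr (Equiv.subtypeEquivRight fun M => ?_)
    constructor
    · rintro ⟨h1, h2⟩; exact ⟨h1, by omega⟩
    · rintro ⟨h1, h2⟩; exact ⟨h1, by omega⟩
  · rw [if_neg hjl]
    haveI : IsEmpty {M : List ℕ // M ∈ ZeroComp k (n - 1) ∧ M.length + j.1 = ℓ} :=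
      ⟨fun M => hjl (by have := M.2.2; omega)⟩
    exact Nat.card_of_isEmpty
end

section
/- The number of k-compositions of n with exactly ℓ total parts equals the multinomial coefficient binom(n−1, ℓ−1)_k, the coefficient of x^(ℓ−1) in (1+x+...+x^k)^(n−1). -/
open Finset

section Aux
open List


lemma prefix_rep_aux {j s : ℕ} {D : List ℕ} (hD : D ≠ []) (hh : 0 < D.head!)
    (h : List.replicate j 0 <+: List.replicate s 0 ++ D) : j ≤ s := by
  induction s generalizing j with
  | zero =>
    cases j with
    | zero => exact le_refl 0
    | succ j =>
      exfalso
      rcases D with _ | ⟨a, t⟩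
      · exact hD rfl
      · simp only [List.replicate_succ, List.replicate_zero, List.nil_append] at h
        rcases List.prefix_cons_iff.mp h with h1 | ⟨u, hu, _⟩
        · simp at h1
        · simp at hu hh; omega
  | succ s ih =>
    cases j with
    | zero => exact Nat.zero_le _
    | succ j =>
      rw [List.replicate_succ, List.replicate_succ, List.cons_append] at h
      rcases List.prefix_cons_iff.mp h with h1 | ⟨u, hu, hu2⟩
      · simp at h1
      · obtain ⟨rfl⟩ : u = List.replicate j 0 := by simpa using hu.symm
        exact Nat.succ_le_succ (ih hu2)

lemma noRun_rep_append {k s : ℕ} {D : List ℕ} (hD : D ≠ []) (hh : 0 < D.head!)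
    (hnr : ¬ List.replicate k 0 <:+: D) (hs : s < k) :
    ¬ List.replicate k 0 <:+: List.replicate s 0 ++ D := by
  induction s with
  | zero => simpa using hnr
  | succ s ih =>
    intro h
    rw [List.replicate_succ, List.cons_append] at h
    rcases List.infix_cons_iff.mp h with h1 | h2
    · rw [← List.cons_append, ← List.replicate_succ] at h1
      have := prefix_rep_aux hD hh h1
      omega
    · exact ih (by omega) h2


def decode : List ℕ → List ℕ
  | [] => [1]
  | (g :: G) =>
    if g = 0 then ((decode G).head! + 1) :: (decode G).tail
    else 1 :: (List.replicate (g-1) 0 ++ decode G)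

lemma getLast!_cons_of_ne_nil {a : ℕ} {l : List ℕ} (h : l ≠ []) :
    (a :: l).getLast! = l.getLast! := by
  cases l with
  | nil => simp at h
  | cons b t =>
    rw [List.getLast!_cons_eq_getLastD, List.getLast!_cons_eq_getLastD, List.getLastD_cons]

lemma getLast!_append_of_ne_nil {l1 l2 : List ℕ} (h : l2 ≠ []) :
    (l1 ++ l2).getLast! = l2.getLast! := by
  induction l1 with
  | nil => simp
  | cons a t ih =>
    rw [List.cons_append, getLast!_cons_of_ne_nil, ih]
    exact fun hc => h (List.append_eq_nil_iff.mp hc).2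

lemma decode_ne_nil (G : List ℕ) : decode G ≠ [] := by
  cases G with
  | nil => simp [decode]
  | cons g G => by_cases h : g = 0 <;> simp [decode, h]

lemma decode_head_pos (G : List ℕ) : 0 < (decode G).head! := by
  cases G with
  | nil => simp [decode]
  | cons g G => by_cases h : g = 0 <;> simp [decode, h]

lemma decode_cons_zero (G : List ℕ) :
    decode (0 :: G) = ((decode G).head! + 1) :: (decode G).tail := by simp [decode]

lemma decode_cons_pos {g : ℕ} (h : g ≠ 0) (G : List ℕ) :
    decode (g :: G) = 1 :: (List.replicate (g-1) 0 ++ decode G) := by simp [decode, h]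

lemma decode_eq_head_cons (G : List ℕ) : decode G = (decode G).head! :: (decode G).tail := by
  obtain ⟨a, t, h⟩ := List.exists_cons_of_ne_nil (decode_ne_nil G)
  simp [h]

lemma decode_sum (G : List ℕ) : (decode G).sum = G.length + 1 := by
  induction G with
  | nil => simp [decode]
  | cons g G ih =>
    by_cases h : g = 0
    · subst h
      rw [decode_cons_zero]
      have h2 : (decode G).head! + (decode G).tail.sum = (decode G).sum := by
        conv_rhs => rw [decode_eq_head_cons G]
        simp
      simp only [List.sum_cons, List.length_cons] at *; omega
    · simp [decode, h, ih]; omega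

lemma decode_length (G : List ℕ) : (decode G).length = G.sum + 1 := by
  induction G with
  | nil => simp [decode]
  | cons g G ih =>
    by_cases h : g = 0
    · subst h
      rw [decode_cons_zero]
      have hp : 0 < (decode G).length := List.length_pos_iff.mpr (decode_ne_nil G)
      simp only [List.length_cons, List.length_tail, List.sum_cons] at *; omega
    · simp [decode, h, ih]; omega

lemma decode_getLast_pos (G : List ℕ) : 0 < (decode G).getLast! := by
  induction G with
  | nil => simp [decode, List.getLast!]
  | cons g G ih =>
    by_cases h : g = 0
    · subst h
      rw [decode_cons_zero]
      rcases ht : (decode G).tail with _ | ⟨a, t⟩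
      · simp [List.getLast!]
      · rw [getLast!_cons_of_ne_nil (by simp [ht])]
        rw [← ht]
        have h2 : (decode G).getLast! = ((decode G).head! :: (decode G).tail).getLast! := by
          conv_lhs => rw [decode_eq_head_cons G]
        rw [h2] at ih
        rwa [getLast!_cons_of_ne_nil (by simp [ht])] at ih
    · rw [decode_cons_pos h, getLast!_cons_of_ne_nil (by simp [decode_ne_nil]),
        getLast!_append_of_ne_nil (decode_ne_nil G)]
      exact ih

lemma rep_not_prefix_cons_pos {k a : ℕ} {l : List ℕ} (hk : 1 ≤ k) (ha : 0 < a) :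
    ¬ List.replicate k 0 <+: a :: l := by
  intro h
  obtain ⟨k, rfl⟩ := Nat.exists_eq_add_of_le hk
  rw [Nat.add_comm, List.replicate_succ] at h
  rcases List.prefix_cons_iff.mp h with h1 | ⟨u, hu, _⟩
  · simp at h1
  · simp at hu; omega

lemma decode_noRun {k : ℕ} (hk : 1 ≤ k) : ∀ {G : List ℕ}, (∀ g ∈ G, g ≤ k) →
    ¬ List.replicate k 0 <:+: decode G := by
  intro G
  induction G with
  | nil =>
    intro _ h
    rw [show decode [] = [1] from rfl] at h
    rcases List.infix_cons_iff.mp h with h1 | h2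
    · exact rep_not_prefix_cons_pos hk one_pos h1
    · simp at h2; omega
  | cons g G ih =>
    intro hG h
    have hG' : ∀ g ∈ G, g ≤ k := fun x hx => hG x (List.mem_cons_of_mem _ hx)
    by_cases hg : g = 0
    · subst hg
      rw [decode_cons_zero] at h
      rcases List.infix_cons_iff.mp h with h1 | h2
      · exact rep_not_prefix_cons_pos hk (by omega) h1
      · refine ih hG' ?_
        rw [decode_eq_head_cons G]
        exact List.infix_cons h2
    · rw [decode_cons_pos hg] at h
      rcases List.infix_cons_iff.mp h with h1 | h2
      · exact rep_not_prefix_cons_pos hk one_pos h1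
      · refine noRun_rep_append (decode_ne_nil G) (decode_head_pos G) (ih hG') ?_ h2
        have := hG g List.mem_cons_self
        omega

lemma decode_run_of_big {k : ℕ} (hk : 1 ≤ k) : ∀ {G : List ℕ} {g : ℕ}, g ∈ G → k + 1 ≤ g →
    List.replicate k 0 <:+: decode G := by
  intro G
  induction G with
  | nil => intro g hg; simp at hg
  | cons x G ih =>
    intro g hg hbig
    rcases List.mem_cons.mp hg with rfl | hmem
    · rw [decode_cons_pos (by omega)]
      apply List.infix_cons
      have : List.replicate (g - 1) (0:ℕ) = List.replicate k 0 ++ List.replicate (g-1-k) 0 := by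
        rw [← List.replicate_add]
        congr 1
        omega
      refine List.IsInfix.trans ?_ (List.IsPrefix.isInfix (List.prefix_append _ _))
      rw [this]
      exact List.IsPrefix.isInfix (List.prefix_append _ _)
    · have hrec := ih hmem hbig
      by_cases hx : x = 0
      · subst hx
        rw [decode_cons_zero]
        rw [decode_eq_head_cons G] at hrec
        rcases List.infix_cons_iff.mp hrec with h1 | h2
        · exact absurd h1 (rep_not_prefix_cons_pos hk (decode_head_pos G))
        · exact List.infix_cons h2
      · rw [decode_cons_pos hx]
        apply List.infix_cons
        exact hrec.trans (List.IsSuffix.isInfix (List.suffix_append _ _))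


def encode : List ℕ → List ℕ
  | [] => []
  | (0 :: _) => []
  | (1 :: t) =>
    if t = [] then [] else
    ((t.takeWhile (· == 0)).length + 1) :: encode (t.dropWhile (· == 0))
  | ((a+2) :: t) => 0 :: encode ((a+1) :: t)
termination_by L => L.sum
decreasing_by
  · simp only [List.sum_cons]
    have h := List.takeWhile_append_dropWhile (p := (· == 0)) (l := t)
    have : (t.takeWhile (· == 0)).sum + (t.dropWhile (· == 0)).sum = t.sum := by
      conv_rhs => rw [← h]
      rw [List.sum_append]
    omega
  · simp only [List.sum_cons]; omega

lemma encode_cons_ge2 {a : ℕ} (h : 2 ≤ a) (t : List ℕ) :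
    encode (a :: t) = 0 :: encode ((a-1) :: t) := by
  obtain ⟨b, rfl⟩ : ∃ b, a = b + 2 := ⟨a - 2, by omega⟩
  rw [encode]
  norm_num

lemma encode_cons_one {t : List ℕ} (h : t ≠ []) :
    encode (1 :: t) = ((t.takeWhile (· == 0)).length + 1) :: encode (t.dropWhile (· == 0)) := by
  rw [encode, if_neg h]


lemma takeWhile_rep_append {g : ℕ} {D : List ℕ} (hD : D ≠ []) (hh : D.head! ≠ 0) :
    (List.replicate g 0 ++ D).takeWhile (· == 0) = List.replicate g 0 ∧
    (List.replicate g 0 ++ D).dropWhile (· == 0) = D := by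
  induction g with
  | zero =>
    rcases D with _ | ⟨a, t⟩
    · exact absurd rfl hD
    · simp at hh
      simp [List.takeWhile_cons, List.dropWhile_cons, hh]
  | succ g ih =>
    rw [List.replicate_succ, List.cons_append, List.takeWhile_cons, List.dropWhile_cons]
    simpa using ih

lemma takeWhile_eq_rep (t : List ℕ) :
    t.takeWhile (· == 0) = List.replicate (t.takeWhile (· == 0)).length 0 := by
  rw [List.eq_replicate_iff]
  exact ⟨rfl, fun b hb => by simpa using List.mem_takeWhile_imp hb⟩

lemma encode_decode (G : List ℕ) : encode (decode G) = G := by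
  induction G with
  | nil => rw [show decode [] = [1] from rfl, encode]; rfl
  | cons g G ih =>
    by_cases hg : g = 0
    · subst hg
      rw [decode_cons_zero, encode_cons_ge2 (by have := decode_head_pos G; omega)]
      rw [Nat.add_sub_cancel, ← decode_eq_head_cons, ih]
    · rw [decode_cons_pos hg]
      have hD := decode_ne_nil G
      have hh : (decode G).head! ≠ 0 := by have := decode_head_pos G; omega
      obtain ⟨h1, h2⟩ := takeWhile_rep_append (g := g - 1) hD hh
      rw [encode_cons_one (by simp [hD]), h1, h2, List.length_replicate, ih]
      congr 1
      omega

lemma getLast!_replicate_zero {z : ℕ} (hz : 1 ≤ z) :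
    (List.replicate z (0:ℕ)).getLast! = 0 := by
  have : List.replicate z (0:ℕ) = List.replicate (z-1) 0 ++ [0] := by
    rw [show ([0]:List ℕ) = List.replicate 1 0 from rfl, ← List.replicate_add]
    congr 1
    omega
  rw [this, getLast!_append_of_ne_nil (by simp)]
  rfl

lemma decode_encode (s : ℕ) : ∀ L : List ℕ, L.sum ≤ s → L ≠ [] → 0 < L.head! →
    0 < L.getLast! → decode (encode L) = L := by
  induction s with
  | zero =>
    intro L hs hne hh _
    rcases L with _ | ⟨a, t⟩
    · exact absurd rfl hne
    · simp at hs hh; omega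
  | succ s ih =>
    intro L hs hne hh hl
    rcases L with _ | ⟨a, t⟩
    · exact absurd rfl hne
    · match a with
      | 0 => simp at hh
      | 1 =>
        by_cases htne : t = []
        · subst htne; rw [encode]; simp [decode]
        · 
          set z := (t.takeWhile (· == 0)).length with hz
          set t' := t.dropWhile (· == 0) with ht'
          have hsplit : List.replicate z 0 ++ t' = t := by
            rw [hz, ← takeWhile_eq_rep, ht', List.takeWhile_append_dropWhile]
          have hlt : (1 :: t).getLast! = t.getLast! := getLast!_cons_of_ne_nil htne
          have ht'ne : t' ≠ [] := by
            intro hc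
            rw [hc, List.append_nil] at hsplit
            have hz1 : 1 ≤ z := by
              rcases Nat.eq_zero_or_pos z with h0 | h1
              · rw [h0] at hsplit; exact absurd hsplit.symm htne
              · exact h1
            rw [hlt, ← hsplit, getLast!_replicate_zero hz1] at hl
            exact absurd hl (lt_irrefl 0)
          have hh' : 0 < t'.head! := by
            have hw := List.head_dropWhile_not (· == 0) (l := t) (by rw [← ht']; exact ht'ne)
            rcases ht'' : t' with _ | ⟨b', u'⟩
            · exact absurd ht'' ht'ne
            · rw [List.head!_cons]
              rw [ht'] at ht''
              simp [ht''] at hw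
              omega
          have hl' : 0 < t'.getLast! := by
            rw [hlt, ← hsplit, getLast!_append_of_ne_nil ht'ne] at hl
            exact hl
          have hsum : t'.sum ≤ s := by
            have h1 : t.sum = t'.sum := by
              conv_lhs => rw [← hsplit]
              simp
            simp only [List.sum_cons] at hs
            omega
          rw [encode_cons_one htne, decode_cons_pos (by omega), Nat.add_sub_cancel,
            ← ht', ← hz, ih t' hsum ht'ne hh' hl', hsplit]
      | (b+2) =>
        have hne' : (b+1) :: t ≠ [] := by simp
        have hh' : 0 < ((b+1) :: t).head! := by simp
        have hl' : 0 < ((b+1) :: t).getLast! := by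
          rcases htt : t with _ | ⟨c, u⟩
          · simp [List.getLast!_cons_eq_getLastD, List.getLastD]
          · rw [getLast!_cons_of_ne_nil (by simp [htt])]
            rw [← htt]
            rwa [getLast!_cons_of_ne_nil (by simp [htt])] at hl
        have hsum : ((b+1) :: t).sum ≤ s := by
          simp only [List.sum_cons] at hs ⊢
          omega
        rw [encode_cons_ge2 (by omega), decode_cons_zero,
          show b + 2 - 1 = b + 1 from rfl, ih _ hsum hne' hh' hl']
        simp


def codes (r : ℕ) : ℕ → Finset (List ℕ)
  | 0 => {[]}
  | (m+1) => (Finset.range (r+1)).biUnion fun g => (codes r m).image (g :: ·)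

lemma mem_codes {r m : ℕ} {G : List ℕ} :
    G ∈ codes r m ↔ G.length = m ∧ ∀ x ∈ G, x ≤ r := by
  induction m generalizing G with
  | zero =>
    simp only [codes, Finset.mem_singleton]
    constructor
    · rintro rfl; simp
    · rintro ⟨h, -⟩; exact List.length_eq_zero_iff.mp h
  | succ m ih =>
    simp only [codes, Finset.mem_biUnion, Finset.mem_image, Finset.mem_range]
    constructor
    · rintro ⟨g, hg, G', hG', rfl⟩
      obtain ⟨h1, h2⟩ := ih.mp hG'
      refine ⟨by simp [h1], ?_⟩
      intro x hx
      rcases List.mem_cons.mp hx with rfl | hx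
      · omega
      · exact h2 x hx
    · rintro ⟨h1, h2⟩
      rcases G with _ | ⟨g, G'⟩
      · simp at h1
      · refine ⟨g, by have := h2 g List.mem_cons_self; omega, G', ?_, rfl⟩
        exact ih.mpr ⟨by simpa using h1, fun x hx => h2 x (List.mem_cons_of_mem _ hx)⟩

lemma coeff_geom (r a : ℕ) :
    ((∑ i ∈ Finset.range (r + 1), (Polynomial.X : Polynomial ℕ) ^ i)).coeff a
      = if a ≤ r then 1 else 0 := by
  rw [Polynomial.finset_sum_coeff]
  simp only [Polynomial.coeff_X_pow]
  rw [Finset.sum_ite_eq (Finset.range (r+1)) a (fun _ => (1:ℕ))]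
  simp only [Finset.mem_range]
  congr 1
  simp [Nat.lt_succ_iff]

lemma card_codes_filter (r m j : ℕ) :
    ((codes r m).filter (fun G => G.sum = j)).card = mcoeff r m j := by
  induction m generalizing j with
  | zero =>
    rw [show codes r 0 = {[]} from rfl]
    simp only [mcoeff, pow_zero, Polynomial.coeff_one]
    by_cases hj : j = 0 <;> simp [Finset.filter_singleton, hj, eq_comm]
  | succ m ih =>
    have key : ∀ N, r + 1 ≤ N → j + 1 ≤ N →
        (∑ g ∈ Finset.range N, if g ≤ r ∧ g ≤ j then mcoeff r m (j - g) else 0)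
        = ((codes r (m+1)).filter (fun G => G.sum = j)).card ∧
        (∑ g ∈ Finset.range N, if g ≤ r ∧ g ≤ j then mcoeff r m (j - g) else 0)
        = mcoeff r (m+1) j := by
      intro N hN1 hN2
      constructor
      · rw [show codes r (m+1) = (Finset.range (r+1)).biUnion
            (fun g => (codes r m).image (g :: ·)) from rfl]
        rw [Finset.filter_biUnion, Finset.card_biUnion]
        · rw [← Finset.sum_subset (Finset.range_subset_range.mpr hN1)
            (fun x _ hx => by
              rw [if_neg]
              simp only [Finset.mem_range] at hx
              omega)]
          refine Finset.sum_congr rfl fun g hg => ?_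
          simp only [Finset.mem_range] at hg
          rw [Finset.filter_image, Finset.card_image_of_injective _
            (fun a b h => by simpa using h)]
          by_cases hgj : g ≤ j
          · rw [if_pos ⟨by omega, hgj⟩, ← ih]
            congr 1
            apply Finset.filter_congr
            intro G _
            simp only [List.sum_cons]
            constructor <;> (intro h; omega)
          · rw [if_neg (by omega)]
            symm
            rw [Finset.card_eq_zero, Finset.filter_eq_empty_iff]
            intro G _
            show ¬ (g :: G).sum = j
            rw [List.sum_cons]
            omega
        · intro x hx y hy hxy
          rw [Function.onFun, Finset.disjoint_left]
          intro G hG1 hG2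
          simp only [Finset.mem_filter, Finset.mem_image] at hG1 hG2
          obtain ⟨hG1, -⟩ := hG1
          obtain ⟨hG2, -⟩ := hG2
          obtain ⟨G1, _, rfl⟩ := hG1
          obtain ⟨G2, _, h2⟩ := hG2
          exact hxy (List.cons_eq_cons.mp h2).1.symm
      · rw [mcoeff, pow_succ', Polynomial.coeff_mul,
          Finset.Nat.sum_antidiagonal_eq_sum_range_succ_mk]
        rw [← Finset.sum_subset (Finset.range_subset_range.mpr hN2)
          (fun x _ hx => by
            rw [if_neg]
            simp only [Finset.mem_range] at hx
            omega)]
        refine Finset.sum_congr rfl fun g hg => ?_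
        simp only [Finset.mem_range] at hg
        rw [coeff_geom]
        by_cases hgr : g ≤ r
        · rw [if_pos hgr, if_pos ⟨hgr, by omega⟩, one_mul]
          rfl
        · rw [if_neg hgr, if_neg (by omega), zero_mul]
    obtain ⟨h1, h2⟩ := key (r + j + 2) (by omega) (by omega)
    rw [← h1, h2]

end Aux

theorem stmt4 (k n ℓ : ℕ) (hk : 1 ≤ k) (hn : 1 ≤ n) (hl : 1 ≤ ℓ) :
    czk k n ℓ = mcoeff k (n - 1) (ℓ - 1) := by
  rw [czk, ← card_codes_filter, ← Nat.card_eq_finsetCard]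
  apply Nat.card_congr
  refine
    { toFun := fun L => ⟨encode L.1, ?_⟩
      invFun := fun G => ⟨decode G.1, ?_⟩
      left_inv := ?_
      right_inv := ?_ }
  · obtain ⟨L, ⟨hne, hh, hgl, hsum, hnr⟩, hlen⟩ := L
    dsimp only
    have hdec : decode (encode L) = L := decode_encode L.sum L le_rfl hne hh hgl
    have hGsum : (decode (encode L)).sum = (encode L).length + 1 := decode_sum _
    have hGlen : (decode (encode L)).length = (encode L).sum + 1 := decode_length _
    rw [hdec] at hGsum hGlen
    simp only [Finset.mem_filter, mem_codes]
    refine ⟨⟨by omega, ?_⟩, by omega⟩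
    intro g hg
    by_contra hbig
    exact hnr (hdec ▸ decode_run_of_big hk hg (by omega))
  · obtain ⟨G, hG⟩ := G
    dsimp only
    simp only [Finset.mem_filter, mem_codes] at hG
    obtain ⟨⟨hlen, hbd⟩, hsum⟩ := hG
    have h1 := decode_sum G
    have h2 := decode_length G
    refine ⟨⟨decode_ne_nil G, decode_head_pos G, decode_getLast_pos G, by omega,
      decode_noRun hk hbd⟩, by omega⟩
  · rintro ⟨L, ⟨hne, hh, hgl, -, -⟩, -⟩
    exact Subtype.ext (decode_encode L.sum L le_rfl hne hh hgl)
  · rintro ⟨G, -⟩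
    exact Subtype.ext (encode_decode G)
end

section
/- The number c_0^k(n,ℓ) of k-compositions of n with exactly ℓ zeros satisfies the recurrence c_0^k(n,ℓ) = c_0^k(n−1,ℓ−k+1) + ... + c_0^k(n−1,ℓ−1) + 2·c_0^k(n−1,ℓ) for n ≥ 2. -/
open Finset

/-- The number of `k`-compositions of `n` (internal zeros definition) with
exactly `ℓ` zero entries. -/
noncomputable def c0k (k n ℓ : ℕ) : ℕ :=
  Nat.card {L : List ℕ // L ∈ ZeroComp k n ∧ L.count 0 = ℓ}

def Cz (k n ℓ : ℕ) : Set (List ℕ) := {L | L ∈ ZeroComp k n ∧ L.count 0 = ℓ}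

lemma c0k_eq_ncard (k n ℓ : ℕ) : c0k k n ℓ = (Cz k n ℓ).ncard :=
  Nat.card_coe_set_eq _

-- getLast! helpers
lemma getLast!_append_ne (X : List ℕ) {M : List ℕ} (h : M ≠ []) :
    (X ++ M).getLast! = M.getLast! := by
  have h2 : M.getLast? = some (M.getLast h) := List.getLast?_eq_getLast h
  have h1 : (X ++ M).getLast? = M.getLast? := List.getLast?_append_of_ne_nil X h
  rw [List.getLast!_of_getLast? (h1.trans h2), List.getLast!_of_getLast? h2]

lemma getLast!_cons_ne (a : ℕ) {M : List ℕ} (h : M ≠ []) :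
    (a :: M).getLast! = M.getLast! := by
  simpa using getLast!_append_ne [a] h

-- head! helper
lemma head!_eq_head {M : List ℕ} (h : M ≠ []) : M.head! = M.head h := by
  exact List.head!_of_head? (List.head?_eq_head h)

lemma cons_head!_tail' {M : List ℕ} (h : M ≠ []) : M.head! :: M.tail = M := by
  rcases M with _ | ⟨a, T⟩
  · exact absurd rfl h
  · simp

-- zero-run infix lemmas
lemma infix_zeros_cons {k : ℕ} (hk : 1 ≤ k) {a : ℕ} (ha : a ≠ 0) (M : List ℕ) :
    (List.replicate k 0 <:+: a :: M) ↔ List.replicate k 0 <:+: M := by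
  constructor
  · intro h
    rcases List.infix_cons_iff.1 h with h | h
    · exfalso
      have h0 : (0:ℕ) < (List.replicate k 0).length := by simp; omega
      have := h.getElem h0
      simp at this
      exact ha this.symm
    · exact h
  · exact fun h => List.infix_cons_iff.2 (Or.inr h)

lemma infix_zeros_replicate_append {k : ℕ} {M : List ℕ} (hM : M ≠ []) (hh : M.head! ≠ 0) :
    ∀ {j : ℕ}, j < k →
    ((List.replicate k 0 <:+: List.replicate j 0 ++ M) ↔ List.replicate k 0 <:+: M) := by
  intro j
  induction j with
  | zero => intro _; simp
  | succ i ih =>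
    intro hj
    have hik : i < k := by omega
    rw [show List.replicate (i+1) 0 ++ M = 0 :: (List.replicate i 0 ++ M) by
      simp [List.replicate_succ]]
    rw [List.infix_cons_iff]
    constructor
    · rintro (h | h)
      · exfalso
        rcases M with _ | ⟨b, T⟩
        · exact hM rfl
        have hb : b ≠ 0 := by simpa using hh
        have hlen : i + 1 < (List.replicate k 0).length := by simpa using hj
        have := h.getElem hlen
        have h2 : (0 :: (List.replicate i 0 ++ b :: T))[i+1]'(by simp) = b := by
          rw [List.getElem_cons_succ, List.getElem_append_right (by simp)]
          simp
        rw [h2] at this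
        simp at this
        exact hb this.symm
      · exact (ih hik).1 h
    · intro h
      exact Or.inr ((ih hik).2 h)


lemma takeWhile_zeros {M : List ℕ} (hh : M.head! ≠ 0) (j : ℕ) :
    (List.replicate j 0 ++ M).takeWhile (· == 0) = List.replicate j 0 := by
  induction j with
  | zero =>
    rcases M with _ | ⟨b, T⟩
    · simp
    · have hb : (b == 0) = false := by simp_all
      simp [List.takeWhile_cons, hb]
  | succ i ih => simp [List.replicate_succ, List.takeWhile_cons, ih]

lemma count_zero_ins (j : ℕ) (M : List ℕ) :
    (1 :: (List.replicate j 0 ++ M)).count 0 = j + M.count 0 := by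
  simp [List.count_cons, List.count_append, List.count_replicate]

lemma sum_ins (j : ℕ) (M : List ℕ) :
    (1 :: (List.replicate j 0 ++ M)).sum = 1 + M.sum := by
  simp


lemma ins_mem_zc {k n j : ℕ} (hn : 1 ≤ n) (hj : j < k)
    {M : List ℕ} (hM : M ≠ []) (hh : 0 < M.head!) :
    (1 :: (List.replicate j 0 ++ M)) ∈ ZeroComp k n ↔ M ∈ ZeroComp k (n-1) := by
  have hk : 1 ≤ k := by omega
  have hne : List.replicate j 0 ++ M ≠ [] := by simp [hM]
  have hlast : (1 :: (List.replicate j 0 ++ M)).getLast! = M.getLast! := by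
    rw [getLast!_cons_ne _ hne, getLast!_append_ne _ hM]
  have hinf : (List.replicate k 0 <:+: 1 :: (List.replicate j 0 ++ M)) ↔
      List.replicate k 0 <:+: M := by
    rw [infix_zeros_cons hk one_ne_zero, infix_zeros_replicate_append hM (by omega) hj]
  constructor
  · rintro ⟨-, -, hl, hs, hi⟩
    refine ⟨hM, hh, ?_, ?_, ?_⟩
    · rwa [hlast] at hl
    · rw [sum_ins] at hs; omega
    · rwa [hinf] at hi
  · rintro ⟨-, -, hl, hs, hi⟩
    refine ⟨by simp, by simp, ?_, ?_, ?_⟩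
    · rwa [hlast]
    · rw [sum_ins]; omega
    · rwa [hinf]

lemma length_le_sum_add_count (L : List ℕ) : L.length ≤ L.sum + L.count 0 := by
  induction L with
  | nil => simp
  | cons a T ih =>
    rcases Nat.eq_zero_or_pos a with rfl | ha <;> simp [List.count_cons] <;> omega

lemma Cz_finite (k n ℓ : ℕ) : (Cz k n ℓ).Finite := by
  have hle : ∀ L ∈ Cz k n ℓ, ∀ x ∈ L, x ≤ n := by
    rintro L ⟨⟨-, -, -, hs, -⟩, -⟩ x hx
    exact hs ▸ List.single_le_sum (fun y _ => Nat.zero_le y) x hx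
  apply Set.Finite.of_finite_image
    (f := List.map (fun x => (⟨min x n, by omega⟩ : Fin (n+1))))
  · apply Set.Finite.subset (List.finite_length_le (Fin (n+1)) (n + ℓ))
    rintro _ ⟨L, ⟨⟨-, -, -, hs, -⟩, hc⟩, rfl⟩
    simpa using hs ▸ hc ▸ length_le_sum_add_count L
  · intro L1 h1 L2 h2 he
    have key : ∀ L ∈ Cz k n ℓ,
        (L.map (fun x => (⟨min x n, by omega⟩ : Fin (n+1)))).map Fin.val = L := by
      intro L hL
      rw [List.map_map]
      refine (List.map_congr_left ?_).trans L.map_id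
      intro x hx
      simp [Nat.min_eq_left (hle L hL x hx)]
    rw [← key L1 h1, ← key L2 h2, he]

lemma ncard_biUnion {α β : Type*} (s : Finset β) (f : β → Set α)
    (hf : ∀ i ∈ s, (f i).Finite)
    (hd : ∀ i ∈ s, ∀ j ∈ s, i ≠ j → Disjoint (f i) (f j)) :
    (⋃ i ∈ s, f i).ncard = ∑ i ∈ s, (f i).ncard := by
  classical
  induction s using Finset.induction with
  | empty => simp
  | @insert a s ha ih =>
    rw [Finset.sum_insert ha, Finset.set_biUnion_insert _ _ _]
    rw [Set.ncard_union_eq ?_ (hf a (by simp)) ?_, ih (fun i hi => hf i (by simp [hi]))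
      (fun i hi j hj hij => hd i (by simp [hi]) j (by simp [hj]) hij)]
    · rw [Set.disjoint_iUnion_right]
      intro i
      rw [Set.disjoint_iUnion_right]
      intro hi
      exact hd a (by simp) i (by simp [hi]) (fun h => ha (h ▸ hi))
    · exact Set.Finite.biUnion s.finite_toSet
        (fun i hi => hf i (by simp [Finset.mem_coe.1 hi]))

def Az (k n ℓ : ℕ) : Set (List ℕ) := {L | L ∈ Cz k n ℓ ∧ 2 ≤ L.head!}
def Dz (k n ℓ j : ℕ) : Set (List ℕ) :=
  {L | L ∈ Cz k n ℓ ∧ L.head! = 1 ∧ (L.tail.takeWhile (· == 0)).length = j}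

lemma getLast!_cons_cases (a : ℕ) (T : List ℕ) :
    (a :: T).getLast! = if T = [] then a else T.getLast! := by
  rcases eq_or_ne T [] with rfl | h
  · simp
  · rw [if_neg h, getLast!_cons_ne a h]

lemma cons_mem_zc {k : ℕ} (hk : 1 ≤ k) {a : ℕ} (ha : a ≠ 0) (M : List ℕ) (n : ℕ) :
    a :: M ∈ ZeroComp k n ↔
      (0 < (a :: M).getLast! ∧ a + M.sum = n ∧ ¬ List.replicate k 0 <:+: M) := by
  constructor
  · rintro ⟨-, -, hl, hs, hi⟩
    exact ⟨hl, by simpa using hs, fun h => hi ((infix_zeros_cons hk ha M).2 h)⟩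
  · rintro ⟨hl, hs, hi⟩
    exact ⟨by simp, by simp; omega, hl, by simpa using hs,
      fun h => hi ((infix_zeros_cons hk ha M).1 h)⟩

lemma Az_eq {k n ℓ : ℕ} (hk : 1 ≤ k) (hn : 2 ≤ n) :
    Az k n ℓ = (fun M => (M.head! + 1) :: M.tail) '' Cz k (n-1) ℓ := by
  ext L
  constructor
  · rintro ⟨⟨hz, hc⟩, h2⟩
    obtain ⟨hne, hh, -, -, -⟩ := id hz
    obtain ⟨a, T, rfl⟩ : ∃ a T, L = a :: T := ⟨L.head!, L.tail, (cons_head!_tail' hne).symm⟩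
    simp only [List.head!_cons] at h2
    rw [cons_mem_zc hk (by omega) T n] at hz
    obtain ⟨hl, hs, hi⟩ := id hz
    refine ⟨(a-1) :: T, ⟨?_, ?_⟩, ?_⟩
    · rw [cons_mem_zc hk (by omega) T (n-1)]
      refine ⟨?_, by omega, hi⟩
      rw [getLast!_cons_cases] at hl ⊢
      rcases eq_or_ne T [] with rfl | h <;> simp_all <;> omega
    · simpa [List.count_cons, show ¬ a = 0 by omega, show ¬ a - 1 = 0 by omega]
        using hc
    · simp only [List.head!_cons, List.tail_cons]
      congr 1
      omega
  · rintro ⟨M, ⟨hz, hc⟩, rfl⟩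
    obtain ⟨hne, hh, -, -, -⟩ := id hz
    obtain ⟨a, T, rfl⟩ : ∃ a T, M = a :: T := ⟨M.head!, M.tail, (cons_head!_tail' hne).symm⟩
    simp only [List.head!_cons] at hh ⊢
    rw [cons_mem_zc hk (by omega) T (n-1)] at hz
    obtain ⟨hl, hs, hi⟩ := id hz
    have hn1 : 1 ≤ n - 1 := by omega
    refine ⟨⟨?_, ?_⟩, by simp; omega⟩
    · rw [List.tail_cons, cons_mem_zc hk (by omega) T n]
      refine ⟨?_, by omega, hi⟩
      rw [getLast!_cons_cases] at hl ⊢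
      rcases eq_or_ne T [] with rfl | h <;> simp_all <;> omega
    · simpa [List.count_cons, show ¬ a = 0 by omega] using hc

lemma Dz_eq {k n ℓ j : ℕ} (hk : 1 ≤ k) (hn : 2 ≤ n) (hj : j < k) (hjl : j ≤ ℓ) :
    Dz k n ℓ j = (fun M => 1 :: (List.replicate j 0 ++ M)) '' Cz k (n-1) (ℓ - j) := by
  ext L
  constructor
  · rintro ⟨⟨hz, hc⟩, h1, hjn⟩
    obtain ⟨hne, -, -, hs, -⟩ := id hz
    obtain ⟨T, rfl⟩ : ∃ T, L = 1 :: T := ⟨L.tail, by rw [← h1]; exact (cons_head!_tail' hne).symm⟩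
    simp only [List.tail_cons] at hjn
    set M := T.dropWhile (· == 0) with hM
    have hW : T.takeWhile (· == 0) = List.replicate j 0 := by
      rw [List.eq_replicate_iff]
      exact ⟨hjn, fun b hb => by simpa using List.mem_takeWhile_imp hb⟩
    have hT : T = List.replicate j 0 ++ M := by
      rw [← hW, hM, List.takeWhile_append_dropWhile]
    have hMne : M ≠ [] := by
      intro h
      rw [h, List.append_nil] at hT
      rw [hT] at hs
      simp at hs
      omega
    have hMh : 0 < M.head! := by
      have := List.head_dropWhile_not (· == 0) hMne
      rw [head!_eq_head hMne]
      simpa using Nat.pos_of_ne_zero (by simpa using this)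
    rw [hT] at hz hc
    rw [count_zero_ins] at hc
    refine ⟨M, ⟨(ins_mem_zc (by omega) hj hMne hMh).1 hz, by omega⟩, by rw [hT]⟩
  · rintro ⟨M, ⟨hz, hc⟩, rfl⟩
    obtain ⟨hMne, hMh, -, -, -⟩ := id hz
    refine ⟨⟨(ins_mem_zc (by omega) hj hMne hMh).2 hz, ?_⟩, by simp, ?_⟩
    · rw [count_zero_ins]; omega
    · rw [List.tail_cons, takeWhile_zeros (by omega) j]
      simp

lemma Dz_le {k n ℓ j : ℕ} {L : List ℕ} (h : L ∈ Dz k n ℓ j) : j ≤ ℓ := by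
  obtain ⟨⟨hz, hc⟩, h1, hjn⟩ := h
  have hsub : (L.tail.takeWhile (· == 0)).Sublist L :=
    ((L.tail.takeWhile_prefix (· == 0)).sublist).trans L.tail_sublist
  have := hsub.count_le 0
  have hall : (L.tail.takeWhile (· == 0)).count 0 = j := by
    rw [← hjn]
    refine List.count_eq_length.2 fun b hb => ?_
    have h := List.mem_takeWhile_imp hb
    simp only [beq_iff_eq] at h
    omega
  omega

lemma Dz_lt {k n ℓ : ℕ} {L : List ℕ} (hL : L ∈ Cz k n ℓ) (h1 : L.head! = 1) :
    (L.tail.takeWhile (· == 0)).length < k := by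
  by_contra hge
  push_neg at hge
  obtain ⟨⟨hne, -, -, -, hi⟩, -⟩ := hL
  apply hi
  have hW : L.tail.takeWhile (· == 0) =
      List.replicate (L.tail.takeWhile (· == 0)).length 0 := by
    rw [List.eq_replicate_iff]
    exact ⟨rfl, fun b hb => by simpa using List.mem_takeWhile_imp hb⟩
  have h2 : List.replicate k 0 <+: L.tail.takeWhile (· == 0) := by
    rw [hW]
    exact ⟨List.replicate ((L.tail.takeWhile (· == 0)).length - k) 0, by
      rw [← List.replicate_add]; congr 1; omega⟩
  exact (h2.trans (L.tail.takeWhile_prefix (· == 0))).isInfix.trans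
    L.tail_suffix.isInfix

lemma Cz_partition {k n ℓ : ℕ} :
    Cz k n ℓ = Az k n ℓ ∪ ⋃ j ∈ Finset.range k, Dz k n ℓ j := by
  ext L
  constructor
  · intro hL
    have hh : 0 < L.head! := hL.1.2.1
    rcases Nat.lt_or_ge L.head! 2 with h2 | h2
    · have h1 : L.head! = 1 := by omega
      refine Or.inr ?_
      simp only [Set.mem_iUnion, Finset.mem_range]
      exact ⟨_, Dz_lt hL h1, hL, h1, rfl⟩
    · exact Or.inl ⟨hL, h2⟩
  · rintro (⟨hL, -⟩ | hL)
    · exact hL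
    · simp only [Set.mem_iUnion] at hL
      obtain ⟨j, -, hL, -, -⟩ := hL
      exact hL

theorem stmt7 (k n ℓ : ℕ) (hk : 1 ≤ k) (hn : 2 ≤ n) :
    c0k k n ℓ = (∑ j ∈ Finset.Icc 1 (k - 1),
      if j ≤ ℓ then c0k k (n - 1) (ℓ - j) else 0) + 2 * c0k k (n - 1) ℓ := by
  have hA : (Az k n ℓ).ncard = c0k k (n-1) ℓ := by
    rw [Az_eq hk hn, c0k_eq_ncard]
    apply Set.ncard_image_of_injOn
    intro M1 h1 M2 h2 he
    simp only [List.cons.injEq] at he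
    rw [← cons_head!_tail' h1.1.1, ← cons_head!_tail' h2.1.1, he.2]
    congr 1
    omega
  have hD : ∀ j ∈ Finset.range k,
      (Dz k n ℓ j).ncard = if j ≤ ℓ then c0k k (n-1) (ℓ-j) else 0 := by
    intro j hj
    rcases le_or_gt j ℓ with hle | hlt
    · rw [if_pos hle, Dz_eq hk hn (Finset.mem_range.1 hj) hle, c0k_eq_ncard]
      apply Set.ncard_image_of_injOn
      intro M1 _ M2 _ he
      simp only [List.cons.injEq, true_and] at he
      exact List.append_cancel_left he
    · rw [if_neg (by omega)]
      have hemp : Dz k n ℓ j = ∅ := by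
        ext L
        simp only [Set.mem_empty_iff_false, iff_false]
        exact fun h => absurd (Dz_le h) (by omega)
      simp [hemp]
  have hdisj : ∀ i ∈ Finset.range k, ∀ j ∈ Finset.range k, i ≠ j →
      Disjoint (Dz k n ℓ i) (Dz k n ℓ j) :=
    fun i _ j _ hij => Set.disjoint_left.2
      (fun L hi hj => hij (hi.2.2.symm.trans hj.2.2))
  have hdisj2 : Disjoint (Az k n ℓ) (⋃ j ∈ Finset.range k, Dz k n ℓ j) := by
    refine Set.disjoint_left.2 fun L hA' hD' => ?_
    simp only [Set.mem_iUnion] at hD'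
    obtain ⟨j, -, -, h1, -⟩ := hD'
    have := hA'.2
    omega
  have hfinD : ∀ j, (Dz k n ℓ j).Finite :=
    fun j => (Cz_finite k n ℓ).subset (fun L h => h.1)
  have main : c0k k n ℓ = (Az k n ℓ).ncard
      + ∑ j ∈ Finset.range k, (Dz k n ℓ j).ncard := by
    rw [c0k_eq_ncard, Cz_partition,
      Set.ncard_union_eq hdisj2 ((Cz_finite k n ℓ).subset (fun L h => h.1))
        (Set.Finite.biUnion (Finset.range k).finite_toSet (fun j _ => hfinD j)),
      ncard_biUnion _ _ (fun j _ => hfinD j) hdisj]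
  have hsplit : Finset.range k = insert 0 (Finset.Icc 1 (k-1)) := by
    ext x
    simp only [Finset.mem_range, Finset.mem_insert, Finset.mem_Icc]
    omega
  have hsum : ∑ j ∈ Finset.range k, (Dz k n ℓ j).ncard
      = (if 0 ≤ ℓ then c0k k (n-1) (ℓ-0) else 0)
        + ∑ j ∈ Finset.Icc 1 (k-1), (if j ≤ ℓ then c0k k (n-1) (ℓ-j) else 0) := by
    rw [Finset.sum_congr rfl hD, hsplit, Finset.sum_insert (by simp)]
  rw [main, hA, hsum]
  simp only [Nat.le_zero, if_pos (Nat.zero_le ℓ), Nat.sub_zero]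
  omega
end

section
/- The number of k-compositions of n with exactly ℓ zeros equals Σ_{m=0}^{n−1} binom(n−1, m) · binom(m, ℓ)_{k−1}, where binom(m,ℓ)_{k−1} is the coefficient of x^ℓ in (1+x+⋯+x^{k−1})^m. -/
open Finset

/-- Flatten a list of (gap, part) blocks. -/
def deblock (b : List (ℕ × ℕ)) : List ℕ := b.flatMap fun ap => List.replicate ap.1 0 ++ [ap.2]

lemma deblock_nil : deblock [] = [] := rfl

lemma deblock_cons (a p : ℕ) (r : List (ℕ × ℕ)) :
    deblock ((a, p) :: r) = List.replicate a 0 ++ p :: deblock r := by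
  simp [deblock, List.flatMap_cons]

lemma deblock_append (b c : List (ℕ × ℕ)) : deblock (b ++ c) = deblock b ++ deblock c :=
  List.flatMap_append ..

lemma deblock_sum (b : List (ℕ × ℕ)) : (deblock b).sum = (b.map Prod.snd).sum := by
  induction b with
  | nil => rfl
  | cons x r ih => obtain ⟨a, p⟩ := x; simp [deblock_cons, ih]

lemma deblock_length (b : List (ℕ × ℕ)) :
    (deblock b).length = (b.map Prod.fst).sum + b.length := by
  induction b with
  | nil => rfl
  | cons x r ih => obtain ⟨a, p⟩ := x; simp [deblock_cons, ih]; ring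

lemma deblock_count (b : List (ℕ × ℕ)) (hp : ∀ x ∈ b, 0 < x.2) :
    (deblock b).count 0 = (b.map Prod.fst).sum := by
  induction b with
  | nil => rfl
  | cons x r ih =>
    obtain ⟨a, p⟩ := x
    have hp0 : 0 < p := hp (a, p) (by simp)
    rw [deblock_cons, List.count_append, List.count_replicate]
    simp only [List.map_cons, List.sum_cons]
    rw [List.count_cons]
    simp only [beq_self_eq_true, if_true]
    rw [ih fun x hx => hp x (List.mem_cons_of_mem _ hx)]
    have : ¬ (p == 0) = true := by simp; omega
    simp [this]

lemma deblock_ne_nil (a p : ℕ) (r : List (ℕ × ℕ)) : deblock ((a, p) :: r) ≠ [] := by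
  rw [deblock_cons]; simp

lemma deblock_head! (p : ℕ) (r : List (ℕ × ℕ)) : (deblock ((0, p) :: r)).head! = p := by
  rw [deblock_cons]; simp

lemma deblock_getLast!_pos (b : List (ℕ × ℕ)) (hb : b ≠ []) (hp : ∀ x ∈ b, 0 < x.2) :
    0 < (deblock b).getLast! := by
  induction b using List.reverseRecOn with
  | nil => exact absurd rfl hb
  | append_singleton c x _ =>
    obtain ⟨a, p⟩ := x
    have hp0 : 0 < p := hp (a, p) (by simp)
    rw [deblock_append]
    have : deblock [(a, p)] = List.replicate a 0 ++ [p] := by simp [deblock]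
    rw [this, ← List.append_assoc]
    rw [List.getLast!_of_getLast? (l := (deblock c ++ List.replicate a 0) ++ [p]) List.getLast?_concat]
    exact hp0

lemma rep_zero_infix_split {j : ℕ} {xs ys : List ℕ} {p : ℕ} (hp : p ≠ 0)
    (h : List.replicate j 0 <:+: xs ++ p :: ys) :
    List.replicate j 0 <:+: xs ∨ List.replicate j 0 <:+: ys := by
  obtain ⟨s, t, hst⟩ := h
  have hlen := congrArg List.length hst
  simp only [List.length_append, List.length_replicate, List.length_cons] at hlen
  by_cases hc1 : s.length + j ≤ xs.length
  · left
    have h1 : s ++ List.replicate j 0 <+: xs ++ p :: ys := ⟨t, by simpa [List.append_assoc] using hst⟩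
    have h2 : xs <+: xs ++ p :: ys := List.prefix_append _ _
    have h3 := List.prefix_of_prefix_length_le h1 h2 (by simp; omega)
    exact ((List.suffix_append s _).isInfix).trans h3.isInfix
  · by_cases hc2 : xs.length + 1 ≤ s.length
    · right
      have h1 : List.replicate j 0 ++ t <:+ xs ++ p :: ys :=
        ⟨s, by simpa [List.append_assoc] using hst⟩
      have h2 : ys <:+ xs ++ p :: ys := by
        have : xs ++ p :: ys = (xs ++ [p]) ++ ys := by simp
        rw [this]; exact List.suffix_append _ _
      have h3 := List.suffix_of_suffix_length_le h1 h2 (by simp; omega)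
      exact ((List.prefix_append _ t).isInfix).trans h3.isInfix
    · exfalso
      have hst' : s ++ (List.replicate j 0 ++ t) = xs ++ p :: ys := by
        simpa [List.append_assoc] using hst
      have hi : xs.length < (xs ++ p :: ys).length := by simp
      have e1 : (xs ++ p :: ys)[xs.length]'hi = p := by
        rw [List.getElem_append_right (le_refl _)]; simp
      have hi2 : xs.length < (s ++ (List.replicate j 0 ++ t)).length := by rw [hst']; exact hi
      have e2 : (s ++ (List.replicate j 0 ++ t))[xs.length]'hi2 = 0 := by
        rw [List.getElem_append_right (by omega), List.getElem_append_left (by simp; omega)]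
        simp
      apply hp
      rw [← e1]
      have : (s ++ (List.replicate j 0 ++ t))[xs.length]'hi2 = (xs ++ p :: ys)[xs.length]'hi := by
        congr 1
      rw [this] at e2
      rw [e2]

lemma deblock_no_run {k : ℕ} (hk : 0 < k) (b : List (ℕ × ℕ))
    (ha : ∀ x ∈ b, x.1 < k) (hp : ∀ x ∈ b, 0 < x.2) :
    ¬ List.replicate k 0 <:+: deblock b := by
  induction b with
  | nil =>
    intro h
    have := h.length_le
    simp [deblock_nil] at this
    omega
  | cons x r ih =>
    obtain ⟨a, p⟩ := x
    rw [deblock_cons]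
    intro h
    have hp0 : 0 < p := hp (a, p) (by simp)
    rcases rep_zero_infix_split (by omega) h with h' | h'
    · have := h'.length_le
      simp at this
      have := ha (a, p) (by simp)
      simp at this
      omega
    · exact ih (fun x hx => ha x (List.mem_cons_of_mem _ hx))
        (fun x hx => hp x (List.mem_cons_of_mem _ hx)) h'

lemma deblock_fst_lt {k : ℕ} (b : List (ℕ × ℕ))
    (h : ¬ List.replicate k 0 <:+: deblock b) : ∀ x ∈ b, x.1 < k := by
  intro x hx
  by_contra hcon
  push_neg at hcon
  obtain ⟨c, d, rfl⟩ := List.append_of_mem hx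
  apply h
  rw [deblock_append, deblock_cons]
  have h1 : List.replicate k 0 <+: List.replicate x.1 0 := by
    refine ⟨List.replicate (x.1 - k) 0, ?_⟩
    rw [← List.replicate_add]
    congr 1
    omega
  calc List.replicate k (0:ℕ) <:+: List.replicate x.1 0 := h1.isInfix
    _ <:+: deblock c ++ (List.replicate x.1 0 ++ x.2 :: deblock d) := by
        have := List.infix_append (deblock c) (List.replicate x.1 0) (x.2 :: deblock d)
        simpa [List.append_assoc] using this

lemma repzero_cons_eq : ∀ {a a' p p' : ℕ} {u u' : List ℕ}, 0 < p → 0 < p' →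
    List.replicate a 0 ++ p :: u = List.replicate a' 0 ++ p' :: u' →
    a = a' ∧ p = p' ∧ u = u' := by
  intro a
  induction a with
  | zero =>
    intro a' p p' u u' hp hp' h
    cases a' with
    | zero => simp_all
    | succ a' =>
      simp only [List.replicate_zero, List.nil_append, List.replicate_succ,
        List.cons_append, List.cons.injEq] at h
      omega
  | succ a ih =>
    intro a' p p' u u' hp hp' h
    cases a' with
    | zero =>
      simp only [List.replicate_zero, List.nil_append, List.replicate_succ,
        List.cons_append, List.cons.injEq] at h
      omega
    | succ a' =>
      simp only [List.replicate_succ, List.cons_append, List.cons.injEq] at h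
      obtain ⟨h1, h2, h3⟩ := ih hp hp' h.2
      exact ⟨by omega, h2, h3⟩

lemma deblock_inj : ∀ (b b' : List (ℕ × ℕ)), (∀ x ∈ b, 0 < x.2) → (∀ x ∈ b', 0 < x.2) →
    deblock b = deblock b' → b = b' := by
  intro b
  induction b with
  | nil =>
    intro b' _ _ h
    cases b' with
    | nil => rfl
    | cons x r => exact absurd h.symm (by obtain ⟨a, p⟩ := x; simpa [deblock_nil] using deblock_ne_nil a p r)
  | cons x r ih =>
    intro b' hp hp' h
    obtain ⟨a, p⟩ := x
    cases b' with
    | nil => exact absurd h (by simpa [deblock_nil] using deblock_ne_nil a p r)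
    | cons x' r' =>
      obtain ⟨a', p'⟩ := x'
      rw [deblock_cons, deblock_cons] at h
      obtain ⟨h1, h2, h3⟩ := repzero_cons_eq (hp (a, p) (by simp)) (hp' (a', p') (by simp)) h
      have := ih r' (fun y hy => hp y (List.mem_cons_of_mem _ hy))
        (fun y hy => hp' y (List.mem_cons_of_mem _ hy)) h3
      simp only [Prod.snd] at h2; simp [h1, h2, this]

lemma getLast!_cons_of_ne_nil_s8 {x : ℕ} {rest : List ℕ} (h : rest ≠ []) :
    (x :: rest).getLast! = rest.getLast! := by
  obtain ⟨a, l', rfl⟩ : ∃ a l', rest = l' ++ [a] := by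
    rcases List.eq_nil_or_concat rest with h2 | ⟨l2, a2, rfl⟩
    · exact absurd h2 h
    · exact ⟨a2, l2, by simp⟩
  rw [List.getLast!_of_getLast? (l := x :: (l' ++ [a]))
      (by rw [show x :: (l' ++ [a]) = (x :: l') ++ [a] by simp]; exact List.getLast?_concat),
    List.getLast!_of_getLast? List.getLast?_concat]

lemma exists_split : ∀ (L : List ℕ), L ≠ [] → 0 < L.getLast! →
    ∃ a q t, 0 < q ∧ L = List.replicate a 0 ++ q :: t := by
  intro L
  induction L with
  | nil => intro h; exact absurd rfl h
  | cons x rest ih =>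
    intro _ hlast
    cases x with
    | succ x => exact ⟨0, x + 1, rest, Nat.succ_pos x, by simp⟩
    | zero =>
      have hrest : rest ≠ [] := by
        rintro rfl
        simp [List.getLast!_cons_eq_getLastD, List.getLastD] at hlast
      rw [getLast!_cons_of_ne_nil_s8 hrest] at hlast
      obtain ⟨a, q, t, hq, ht⟩ := ih hrest hlast
      exact ⟨a + 1, q, t, hq, by rw [List.replicate_succ]; simp [ht]⟩

lemma getLast!_append_of_ne_nil_s8 {xs ys : List ℕ} (h : ys ≠ []) :
    (xs ++ ys).getLast! = ys.getLast! := by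
  obtain ⟨a, l', rfl⟩ : ∃ a l', ys = l' ++ [a] := by
    rcases List.eq_nil_or_concat ys with h2 | ⟨l2, a2, rfl⟩
    · exact absurd h2 h
    · exact ⟨a2, l2, by simp⟩
  rw [List.getLast!_of_getLast? (l := xs ++ (l' ++ [a]))
      (by rw [← List.append_assoc]; exact List.getLast?_concat),
    List.getLast!_of_getLast? List.getLast?_concat]

lemma exists_blocks (L : List ℕ) (hne : L ≠ []) (hlast : 0 < L.getLast!) :
    ∃ b, b ≠ [] ∧ (∀ x ∈ b, 0 < x.2) ∧ deblock b = L := by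
  suffices H : ∀ n (L : List ℕ), L.length = n → L ≠ [] → 0 < L.getLast! →
      ∃ b, b ≠ [] ∧ (∀ x ∈ b, 0 < x.2) ∧ deblock b = L from H _ L rfl hne hlast
  clear hne hlast L
  intro n
  induction n using Nat.strong_induction_on with
  | _ n ih =>
    intro L h hne hlast
    obtain ⟨a, q, t, hq, rfl⟩ := exists_split L hne hlast
    by_cases ht : t = []
    · subst ht
      refine ⟨[(a, q)], by simp, by simpa using hq, ?_⟩
      rw [deblock_cons, deblock_nil]
    · have hlt : 0 < t.getLast! := by
        rw [← getLast!_append_of_ne_nil_s8 (xs := List.replicate a 0 ++ [q]) ht]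
        simpa [List.append_assoc] using hlast
      have hlen : t.length < n := by
        subst h
        simp
        omega
      obtain ⟨b', hb'ne, hb'p, hb'⟩ := ih t.length hlen t rfl ht hlt
      refine ⟨(a, q) :: b', by simp, ?_, by rw [deblock_cons, hb']⟩
      rintro x hx
      rcases List.mem_cons.mp hx with rfl | hx'
      · exact hq
      · exact hb'p x hx' 

/-- Lists of length `m` with entries `< k` summing to `ℓ`. -/
def gapsF (k : ℕ) : ℕ → ℕ → Finset (List ℕ)
  | 0, ℓ => if ℓ = 0 then {[]} else ∅
  | m + 1, ℓ => (Finset.range (min k (ℓ + 1))).biUnion fun a =>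
      (gapsF k m (ℓ - a)).map ⟨List.cons a, List.cons_injective⟩

lemma mem_gapsF {k : ℕ} : ∀ {m ℓ : ℕ} {L : List ℕ},
    L ∈ gapsF k m ℓ ↔ L.length = m ∧ (∀ x ∈ L, x < k) ∧ L.sum = ℓ := by
  intro m
  induction m with
  | zero =>
    intro ℓ L
    constructor
    · intro h
      rw [gapsF] at h
      split_ifs at h with hl
      · simp at h
        subst h hl
        simp
      · simp at h
    · rintro ⟨h1, _, h3⟩
      rw [List.length_eq_zero_iff] at h1
      subst h1
      simp at h3
      rw [gapsF, if_pos h3.symm]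
      simp
  | succ m ih =>
    intro ℓ L
    rw [gapsF]
    simp only [Finset.mem_biUnion, Finset.mem_range, Finset.mem_map,
      Function.Embedding.coeFn_mk]
    constructor
    · rintro ⟨a, ha, t, ht, rfl⟩
      obtain ⟨h1, h2, h3⟩ := ih.mp ht
      refine ⟨by simp [h1], ?_, ?_⟩
      · rintro x hx
        rcases List.mem_cons.mp hx with rfl | hx'
        · omega
        · exact h2 x hx'
      · simp [h3]; omega
    · rintro ⟨h1, h2, h3⟩
      cases L with
      | nil => simp at h1
      | cons a t =>
        refine ⟨a, ?_, t, ih.mpr ⟨by simpa using h1, fun x hx => h2 x (List.mem_cons_of_mem _ hx), ?_⟩, rfl⟩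
        · have := h2 a (by simp)
          simp at h3
          omega
        · simp at h3
          omega

/-- Lists of length `j` with positive entries summing to `n`. -/
def compsF : ℕ → ℕ → Finset (List ℕ)
  | n, 0 => if n = 0 then {[]} else ∅
  | n, j + 1 => (Finset.range n).biUnion fun i =>
      (compsF (n - (i + 1)) j).map ⟨List.cons (i + 1), List.cons_injective⟩

lemma mem_compsF : ∀ {j n : ℕ} {L : List ℕ},
    L ∈ compsF n j ↔ L.length = j ∧ (∀ x ∈ L, 0 < x) ∧ L.sum = n := by
  intro j
  induction j with
  | zero =>
    intro n L
    constructor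
    · intro h
      rw [compsF] at h
      split_ifs at h with hl
      · simp at h
        subst h hl
        simp
      · simp at h
    · rintro ⟨h1, _, h3⟩
      rw [List.length_eq_zero_iff] at h1
      subst h1
      simp at h3
      rw [compsF, if_pos h3.symm]
      simp
  | succ j ih =>
    intro n L
    rw [compsF]
    simp only [Finset.mem_biUnion, Finset.mem_range, Finset.mem_map,
      Function.Embedding.coeFn_mk]
    constructor
    · rintro ⟨i, hi, t, ht, rfl⟩
      obtain ⟨h1, h2, h3⟩ := ih.mp ht
      refine ⟨by simp [h1], ?_, ?_⟩
      · rintro x hx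
        rcases List.mem_cons.mp hx with rfl | hx'
        · omega
        · exact h2 x hx'
      · simp [h3]; omega
    · rintro ⟨h1, h2, h3⟩
      cases L with
      | nil => simp at h1
      | cons a t =>
        have ha : 0 < a := h2 a (by simp)
        have hsum : a + t.sum = n := by simpa using h3
        refine ⟨a - 1, by omega, t,
          ih.mpr ⟨by simpa using h1, fun x hx => h2 x (List.mem_cons_of_mem _ hx), by omega⟩, ?_⟩
        congr 1
        omega

lemma mcoeff_zero (r ℓ : ℕ) : mcoeff r 0 ℓ = if ℓ = 0 then 1 else 0 := by
  rw [mcoeff, pow_zero, Polynomial.coeff_one]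

lemma mcoeff_succ (r m ℓ : ℕ) :
    mcoeff r (m + 1) ℓ = ∑ a ∈ Finset.range (ℓ + 1), if a < r + 1 then mcoeff r m (ℓ - a) else 0 := by
  rw [mcoeff, pow_succ', Polynomial.coeff_mul, Finset.Nat.sum_antidiagonal_eq_sum_range_succ_mk]
  refine Finset.sum_congr rfl fun a _ => ?_
  rw [Polynomial.finset_sum_coeff]
  simp only [Polynomial.coeff_X_pow]
  rw [Finset.sum_ite_eq (Finset.range (r + 1)) a (fun _ => (1 : ℕ))]
  simp only [Finset.mem_range]
  split_ifs <;> simp [mcoeff]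

lemma card_gapsF {k : ℕ} (hk : 0 < k) : ∀ m ℓ, (gapsF k m ℓ).card = mcoeff (k - 1) m ℓ := by
  intro m
  induction m with
  | zero =>
    intro ℓ
    rw [gapsF, mcoeff_zero]
    split_ifs <;> simp
  | succ m ih =>
    intro ℓ
    rw [gapsF, Finset.card_biUnion]
    · rw [mcoeff_succ]
      have hfil : Finset.range (min k (ℓ + 1)) =
          (Finset.range (ℓ + 1)).filter (fun a => a < k - 1 + 1) := by
        ext x
        simp only [Finset.mem_range, Finset.mem_filter]
        omega
      rw [← Finset.sum_filter, ← hfil]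
      refine Finset.sum_congr rfl fun a _ => ?_
      rw [Finset.card_map, ih]
    · intro a _ a' _ hne
      rw [Function.onFun, Finset.disjoint_left]
      rintro L hL hL'
      simp only [Finset.mem_map, Function.Embedding.coeFn_mk] at hL hL'
      obtain ⟨t, _, rfl⟩ := hL
      obtain ⟨t', _, h⟩ := hL'
      exact hne (List.cons.injEq .. ▸ h).1.symm

lemma sum_choose_range (N j : ℕ) : ∑ t ∈ Finset.range N, t.choose j = N.choose (j + 1) := by
  induction N with
  | zero => simp
  | succ N ih => rw [Finset.sum_range_succ, ih, Nat.choose_succ_succ' N j, Nat.add_comm]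

lemma compsF_disj (n j : ℕ) : ∀ a ∈ Finset.range n, ∀ a' ∈ Finset.range n, a ≠ a' →
    Disjoint ((compsF (n - (a + 1)) j).map ⟨List.cons (a + 1), List.cons_injective⟩)
      ((compsF (n - (a' + 1)) j).map ⟨List.cons (a' + 1), List.cons_injective⟩) := by
  intro a _ a' _ hne
  rw [Finset.disjoint_left]
  rintro L hL hL'
  simp only [Finset.mem_map, Function.Embedding.coeFn_mk] at hL hL'
  obtain ⟨t, _, rfl⟩ := hL
  obtain ⟨t', _, h⟩ := hL'
  injection h with h1 _
  exact hne (by omega)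

lemma card_compsF : ∀ j n, 0 < n → (compsF n (j + 1)).card = Nat.choose (n - 1) j := by
  intro j
  induction j with
  | zero =>
    intro n hn
    rw [compsF, Finset.card_biUnion (compsF_disj n 0)]
    have : ∀ i ∈ Finset.range n,
        ((compsF (n - (i + 1)) 0).map ⟨List.cons (i + 1), List.cons_injective⟩).card
          = if i = n - 1 then 1 else 0 := by
      intro i hi
      simp only [Finset.mem_range] at hi
      rw [Finset.card_map, compsF]
      split_ifs with h1 h2 h2 <;> simp_all <;> omega
    rw [Finset.sum_congr rfl this, Finset.sum_ite_eq' (Finset.range n) (n - 1) (fun _ => (1:ℕ))]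
    simp only [Finset.mem_range]
    rw [if_pos (by omega)]
    simp
  | succ j ih =>
    intro n hn
    rw [compsF, Finset.card_biUnion (compsF_disj n (j + 1))]
    simp only [Finset.card_map]
    obtain ⟨N, rfl⟩ : ∃ N, n = N + 1 := ⟨n - 1, by omega⟩
    rw [Finset.sum_range_succ]
    have hlast : (compsF (N + 1 - (N + 1)) (j + 1)).card = 0 := by
      simp only [Nat.sub_self]
      rw [compsF]
      simp
    rw [hlast, Nat.add_zero]
    have hterm : ∀ i ∈ Finset.range N, (compsF (N + 1 - (i + 1)) (j + 1)).card
        = (fun t => t.choose j) (N - 1 - i) := by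
      intro i hi
      simp only [Finset.mem_range] at hi
      rw [ih (N + 1 - (i + 1)) (by omega)]
      congr 1
      omega
    rw [Finset.sum_congr rfl hterm, Finset.sum_range_reflect (fun t => t.choose j) N,
      sum_choose_range]
    simp

lemma list_length_le_sum : ∀ (P : List ℕ), (∀ x ∈ P, 0 < x) → P.length ≤ P.sum := by
  intro P
  induction P with
  | nil => simp
  | cons x t ih =>
    intro h
    have := h x (by simp)
    have := ih (fun y hy => h y (List.mem_cons_of_mem _ hy))
    simp only [List.length_cons, List.sum_cons]
    omega

lemma phi_spec {k n ℓ m : ℕ} (hk : 0 < k) {P g : List ℕ}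
    (hP : P ∈ compsF n (m + 1)) (hg : g ∈ gapsF k m ℓ) :
    (deblock ((0, P.head!) :: g.zip P.tail)) ∈ ZeroComp k n ∧
    (deblock ((0, P.head!) :: g.zip P.tail)).count 0 = ℓ ∧
    (deblock ((0, P.head!) :: g.zip P.tail)).length = m + 1 + ℓ := by
  obtain ⟨hPl, hPp, hPs⟩ := mem_compsF.mp hP
  obtain ⟨hgl, hgk, hgs⟩ := mem_gapsF.mp hg
  have hPne : P ≠ [] := by intro h; rw [h] at hPl; simp at hPl
  have hPeq : P.head! :: P.tail = P := List.cons_head!_tail hPne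
  have htl : P.tail.length = m := by
    rw [List.length_tail, hPl]; omega
  have hzlen : g.length ≤ P.tail.length := by omega
  have hmapfst : (g.zip P.tail).map Prod.fst = g := List.map_fst_zip hzlen
  have hmapsnd : (g.zip P.tail).map Prod.snd = P.tail := List.map_snd_zip (by omega)
  have hheadmem : P.head! ∈ P := by rw [← hPeq]; exact List.mem_cons_self
  have hpos : ∀ x ∈ (0, P.head!) :: g.zip P.tail, 0 < x.2 := by
    rintro x hx
    rcases List.mem_cons.mp hx with rfl | hx'
    · exact hPp _ hheadmem
    · exact hPp _ (List.mem_of_mem_tail (List.of_mem_zip hx').2)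
  have hfst : ∀ x ∈ (0, P.head!) :: g.zip P.tail, x.1 < k := by
    rintro x hx
    rcases List.mem_cons.mp hx with rfl | hx'
    · exact hk
    · exact hgk _ (hmapfst ▸ List.mem_map_of_mem (f := Prod.fst) hx')
  have hsum : (deblock ((0, P.head!) :: g.zip P.tail)).sum = n := by
    rw [deblock_sum]
    simp only [List.map_cons, List.sum_cons, hmapsnd]
    have := congrArg List.sum hPeq
    simp only [List.sum_cons] at this
    rw [this, hPs]
  have hcount : (deblock ((0, P.head!) :: g.zip P.tail)).count 0 = ℓ := by
    rw [deblock_count _ hpos]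
    simp [hmapfst, hgs]
  have hlen : (deblock ((0, P.head!) :: g.zip P.tail)).length = m + 1 + ℓ := by
    rw [deblock_length]
    simp only [List.map_cons, List.sum_cons, hmapfst, List.length_cons, List.length_zip]
    omega
  refine ⟨⟨deblock_ne_nil _ _ _, ?_, ?_, hsum, deblock_no_run hk _ hfst hpos⟩, hcount, hlen⟩
  · rw [deblock_head!]
    exact hPp _ hheadmem
  · exact deblock_getLast!_pos _ (by simp) hpos

lemma phi_injOn {k n ℓ m : ℕ} {P g P' g' : List ℕ}
    (hP : P ∈ compsF n (m + 1)) (hg : g ∈ gapsF k m ℓ)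
    (hP' : P' ∈ compsF n (m + 1)) (hg' : g' ∈ gapsF k m ℓ)
    (h : deblock ((0, P.head!) :: g.zip P.tail) = deblock ((0, P'.head!) :: g'.zip P'.tail)) :
    P = P' ∧ g = g' := by
  obtain ⟨hPl, hPp, hPs⟩ := mem_compsF.mp hP
  obtain ⟨hgl, hgk, hgs⟩ := mem_gapsF.mp hg
  obtain ⟨hPl', hPp', hPs'⟩ := mem_compsF.mp hP'
  obtain ⟨hgl', hgk', hgs'⟩ := mem_gapsF.mp hg'
  have hPne : P ≠ [] := by intro hh; rw [hh] at hPl; simp at hPl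
  have hPne' : P' ≠ [] := by intro hh; rw [hh] at hPl'; simp at hPl'
  have hPeq : P.head! :: P.tail = P := List.cons_head!_tail hPne
  have hPeq' : P'.head! :: P'.tail = P' := List.cons_head!_tail hPne'
  have htl : P.tail.length = m := by
    rw [List.length_tail, hPl]; omega
  have htl' : P'.tail.length = m := by
    rw [List.length_tail, hPl']; omega
  have hpos : ∀ x ∈ (0, P.head!) :: g.zip P.tail, 0 < x.2 := by
    rintro x hx
    rcases List.mem_cons.mp hx with rfl | hx'
    · exact hPp _ (hPeq ▸ List.mem_cons_self)
    · exact hPp _ (List.mem_of_mem_tail (List.of_mem_zip hx').2)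
  have hpos' : ∀ x ∈ (0, P'.head!) :: g'.zip P'.tail, 0 < x.2 := by
    rintro x hx
    rcases List.mem_cons.mp hx with rfl | hx'
    · exact hPp' _ (hPeq' ▸ List.mem_cons_self)
    · exact hPp' _ (List.mem_of_mem_tail (List.of_mem_zip hx').2)
  have := deblock_inj _ _ hpos hpos' h
  simp only [List.cons.injEq, Prod.mk.injEq] at this
  obtain ⟨⟨-, hhead⟩, hzip⟩ := this
  have hg1 : g = g' := by
    rw [← List.map_fst_zip (l₁ := g) (l₂ := P.tail) (by omega), hzip, List.map_fst_zip (l₁ := g') (l₂ := P'.tail) (by omega)]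
  have ht1 : P.tail = P'.tail := by
    rw [← List.map_snd_zip (l₁ := g) (l₂ := P.tail) (by omega), hzip, List.map_snd_zip (l₁ := g') (l₂ := P'.tail) (by omega)]
  refine ⟨?_, hg1⟩
  rw [← hPeq, ← hPeq', hhead, ht1]

lemma phi_surj {k n ℓ : ℕ} (hk : 0 < k) {L : List ℕ}
    (hL : L ∈ ZeroComp k n) (hc : L.count 0 = ℓ) (hn : 0 < n) :
    ∃ m P g, m < n ∧ P ∈ compsF n (m + 1) ∧ g ∈ gapsF k m ℓ ∧
      deblock ((0, P.head!) :: g.zip P.tail) = L := by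
  obtain ⟨hne, hhead, hlast, hsum, hrun⟩ := hL
  obtain ⟨b, hbne, hbp, hbL⟩ := exists_blocks L hne hlast
  obtain ⟨⟨a, p⟩, r, rfl⟩ : ∃ x r, b = x :: r := by
    cases b with
    | nil => exact absurd rfl hbne
    | cons x r => exact ⟨x, r, rfl⟩
  have ha0 : a = 0 := by
    by_contra ha
    obtain ⟨a', rfl⟩ : ∃ a', a = a' + 1 := ⟨a - 1, by omega⟩
    rw [← hbL, deblock_cons, List.replicate_succ] at hhead
    simp at hhead
  subst ha0
  have hp : 0 < p := hbp (0, p) (by simp)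
  have hfstlt : ∀ x ∈ (0, p) :: r, x.1 < k := deblock_fst_lt _ (hbL ▸ hrun)
  refine ⟨r.length, p :: r.map Prod.snd, r.map Prod.fst, ?_, ?_, ?_, ?_⟩
  · have hmem : ∀ x ∈ p :: r.map Prod.snd, 0 < x := by
      rintro x hx
      rcases List.mem_cons.mp hx with rfl | hx'
      · exact hp
      · obtain ⟨y, hy, rfl⟩ := List.mem_map.mp hx'
        exact hbp y (List.mem_cons_of_mem _ hy)
    have hsum' : (p :: r.map Prod.snd).sum = n := by
      rw [← hsum, ← hbL, deblock_sum]
      simp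
    have := list_length_le_sum _ hmem
    rw [hsum'] at this
    simp at this
    omega
  · refine mem_compsF.mpr ⟨by simp, ?_, ?_⟩
    · rintro x hx
      rcases List.mem_cons.mp hx with rfl | hx'
      · exact hp
      · obtain ⟨y, hy, rfl⟩ := List.mem_map.mp hx'
        exact hbp y (List.mem_cons_of_mem _ hy)
    · rw [← hsum, ← hbL, deblock_sum]
      simp
  · refine mem_gapsF.mpr ⟨by simp, ?_, ?_⟩
    · rintro x hx
      obtain ⟨y, hy, rfl⟩ := List.mem_map.mp hx
      exact hfstlt y (List.mem_cons_of_mem _ hy)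
    · rw [← hc, ← hbL, deblock_count _ hbp]
      simp
  · rw [← hbL]
    congr 1
    simp only [List.head!_cons, List.tail_cons]
    rw [← List.unzip_fst, ← List.unzip_snd, List.zip_unzip]

theorem stmt8 (k n ℓ : ℕ) (hk : 1 ≤ k) (hn : 1 ≤ n) :
    c0k k n ℓ = ∑ m ∈ Finset.range n, Nat.choose (n - 1) m * mcoeff (k - 1) m ℓ := by
  classical
  set F : Finset (List ℕ) := (Finset.range n).biUnion
      (fun m => ((compsF n (m + 1)) ×ˢ (gapsF k m ℓ)).image
        (fun pg : List ℕ × List ℕ => deblock ((0, pg.1.head!) :: pg.2.zip pg.1.tail))) with hF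
  have hset : {L : List ℕ | L ∈ ZeroComp k n ∧ L.count 0 = ℓ} = ↑F := by
    ext L
    simp only [Set.mem_setOf_eq, Finset.coe_biUnion, Set.mem_iUnion, Finset.mem_coe,
      Finset.mem_image, Finset.mem_biUnion, hF, Finset.mem_range, Finset.mem_product]
    constructor
    · rintro ⟨h1, h2⟩
      obtain ⟨m, P, g, hm, hP, hg, heq⟩ := phi_surj hk h1 h2 hn
      exact ⟨m, hm, (P, g), ⟨hP, hg⟩, heq⟩
    · rintro ⟨m, hm, ⟨P, g⟩, ⟨hP, hg⟩, rfl⟩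
      obtain ⟨hz, hc, -⟩ := phi_spec hk hP hg
      exact ⟨hz, hc⟩
  have h1 : c0k k n ℓ = F.card := by
    rw [c0k]
    have : Nat.card {L : List ℕ // L ∈ ZeroComp k n ∧ L.count 0 = ℓ}
        = Nat.card ↥{L : List ℕ | L ∈ ZeroComp k n ∧ L.count 0 = ℓ} := rfl
    rw [this, Nat.card_coe_set_eq, hset, Set.ncard_coe_finset]
  rw [h1, hF, Finset.card_biUnion]
  · refine Finset.sum_congr rfl fun m hm => ?_
    simp only [Finset.mem_range] at hm
    rw [Finset.card_image_of_injOn, Finset.card_product, card_compsF m n (by omega),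
      card_gapsF (by omega) m ℓ]
    rintro ⟨P, g⟩ hPg ⟨P', g'⟩ hPg' heq
    simp only [Finset.mem_coe, Finset.mem_product] at hPg hPg'
    obtain ⟨h1, h2⟩ := phi_injOn hPg.1 hPg.2 hPg'.1 hPg'.2 heq
    simp [h1, h2]
  · intro m _ m' _ hne
    rw [Function.onFun, Finset.disjoint_left]
    rintro L hL hL'
    simp only [Finset.mem_image, Finset.mem_product] at hL hL'
    obtain ⟨⟨P, g⟩, ⟨hP, hg⟩, rfl⟩ := hL
    obtain ⟨⟨P', g'⟩, ⟨hP', hg'⟩, heq⟩ := hL'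
    have e1 := (phi_spec (by omega : 0 < k) hP hg).2.2
    have e2 := (phi_spec (by omega : 0 < k) hP' hg').2.2
    rw [heq] at e2
    rw [e1] at e2
    omega
end

section
/- The number c^k_{12}(n) of k-compositions of n whose positive parts are all 1 or 2 satisfies c^k_{12}(1)=1, c^k_{12}(2)=k+1, and c^k_{12}(n) = k·c^k_{12}(n−1) + k·c^k_{12}(n−2) for n ≥ 3. -/
open Finset

/-- The number of `k`-compositions of `n` all of whose parts are `1` or `2`. -/
noncomputable def c12 (k n : ℕ) : ℕ :=
  Nat.card {L : List (ℕ × ℕ) // L ∈ ColoredComp k n ∧ ∀ p ∈ L, p.1 = 1 ∨ p.1 = 2}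

def S12 (k n : ℕ) : Set (List (ℕ × ℕ)) :=
  {L | L ∈ ColoredComp k n ∧ ∀ p ∈ L, p.1 = 1 ∨ p.1 = 2}

-- length ≤ sum for lists of positive nats
lemma len_le_sum : ∀ (L : List ℕ), (∀ x ∈ L, 1 ≤ x) → L.length ≤ L.sum := by
  intro L
  induction L with
  | nil => simp
  | cons a t ih =>
    intro h
    simp only [List.length_cons, List.sum_cons]
    have h1 : 1 ≤ a := h a (by simp)
    have h2 := ih (fun x hx => h x (by simp [hx]))
    omega

lemma S12_finite (k n : ℕ) : (S12 k n).Finite := by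
  classical
  set A : Set (ℕ × ℕ) := (Set.Iic 2) ×ˢ (Set.Iic k) with hA
  have hAfin : A.Finite := (Set.finite_Iic 2).prod (Set.finite_Iic k)
  have : Finite ↥A := hAfin.to_subtype
  have hfin : {l : List ↥A | l.length ≤ n}.Finite := List.finite_length_le ↥A n
  have himg : ((fun l : List ↥A => l.map Subtype.val) '' {l | l.length ≤ n}).Finite :=
    hfin.image _
  refine himg.subset ?_
  rintro L ⟨⟨hne, hparts, hhead, hsum⟩, h12⟩
  have hmem : ∀ p ∈ L, p ∈ A := by
    intro p hp
    have := hparts p hp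
    have := h12 p hp
    constructor <;> simp <;> omega
  refine ⟨L.attach.map (fun x => (⟨x.1, hmem x.1 x.2⟩ : ↥A)), ?_, ?_⟩
  · simp only [Set.mem_setOf_eq, List.length_map, List.length_attach]
    calc L.length = (L.map Prod.fst).length := by simp
    _ ≤ (L.map Prod.fst).sum := by
        apply len_le_sum
        intro x hx
        obtain ⟨p, hp, rfl⟩ := List.mem_map.1 hx
        exact (hparts p hp).1
    _ = n := hsum
  · show (L.attach.map (fun x => (⟨x.1, hmem x.1 x.2⟩ : ↥A))).map Subtype.val = L
    rw [List.map_map]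
    exact List.attach_map_subtype_val L

instance S12_finite' (k n : ℕ) : Finite ↥(S12 k n) := (S12_finite k n).to_subtype

lemma c12_eq (k n : ℕ) :
    Nat.card {L : List (ℕ × ℕ) // L ∈ ColoredComp k n ∧ ∀ p ∈ L, p.1 = 1 ∨ p.1 = 2}
      = (S12 k n).ncard := by
  exact Nat.card_coe_set_eq (S12 k n)

lemma sum_le_two_mul : ∀ (L : List ℕ), (∀ x ∈ L, x ≤ 2) → L.sum ≤ 2 * L.length := by
  intro L
  induction L with
  | nil => simp
  | cons a t ih =>
    intro h
    have h1 : a ≤ 2 := h a (by simp)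
    have h2 := ih (fun x hx => h x (by simp [hx]))
    simp only [List.sum_cons, List.length_cons]
    omega

lemma S12_one (k : ℕ) (hk : 1 ≤ k) : S12 k 1 = {[(1, 1)]} := by
  ext L
  simp only [S12, ColoredComp, Set.mem_setOf_eq, Set.mem_singleton_iff]
  constructor
  · rintro ⟨⟨hne, hparts, hhead, hsum⟩, h12⟩
    match L with
    | [] => exact absurd rfl hne
    | (a, b) :: M =>
      simp only [List.map_cons, List.sum_cons] at hsum
      have ha : 1 ≤ a := (hparts (a, b) (by simp)).1
      have hM : M = [] := by
        cases M with
        | nil => rfl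
        | cons c M' =>
          have hc := (hparts c (by simp)).1
          simp only [List.map_cons, List.sum_cons] at hsum
          omega
      subst hM
      have hb : b = 1 := by simpa using hhead
      simp only [List.map_nil, List.sum_nil] at hsum
      have : a = 1 := by omega
      simp [this, hb]
  · rintro rfl
    refine ⟨⟨by simp, ?_, by simp, by simp⟩, by simp⟩
    rintro p hp
    simp at hp
    subst hp
    exact ⟨le_refl 1, le_refl 1, hk⟩

lemma S12_two (k : ℕ) (hk : 1 ≤ k) :
    S12 k 2 = insert [(2, 1)] ((fun c => [(1, 1), (1, c)]) '' Set.Icc 1 k) := by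
  ext L
  simp only [S12, ColoredComp, Set.mem_setOf_eq, Set.mem_insert_iff, Set.mem_image,
    Set.mem_Icc]
  constructor
  · rintro ⟨⟨hne, hparts, hhead, hsum⟩, h12⟩
    match L with
    | [] => exact absurd rfl hne
    | (a, b) :: M =>
      simp only [List.map_cons, List.sum_cons] at hsum
      have hb : b = 1 := by simpa using hhead
      subst hb
      rcases h12 (a, 1) (by simp) with ha | ha
      · subst ha
        -- sum of M parts = 1, so M = [(1,d)]
        match M with
        | [] => simp at hsum
        | (c, d) :: M' =>
          simp only [List.map_cons, List.sum_cons] at hsum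
          have hc1 : 1 ≤ c := (hparts (c, d) (by simp)).1
          have hM' : M' = [] := by
            cases M' with
            | nil => rfl
            | cons e M'' =>
              have he := (hparts e (by simp)).1
              simp only [List.map_cons, List.sum_cons] at hsum
              omega
          subst hM'
          simp only [List.map_nil, List.sum_nil] at hsum
          have hc : c = 1 := by omega
          subst hc
          have hd := (hparts (1, d) (by simp)).2
          exact Or.inr ⟨d, ⟨hd.1, hd.2⟩, rfl⟩
      · subst ha
        have hM : M = [] := by
          cases M with
          | nil => rfl
          | cons c M' =>
            have hc := (hparts c (by simp)).1
            simp only [List.map_cons, List.sum_cons] at hsum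
            omega
        subst hM
        exact Or.inl rfl
  · rintro (rfl | ⟨c, ⟨hc1, hc2⟩, rfl⟩)
    · refine ⟨⟨by simp, ?_, by simp, by simp⟩, by simp⟩
      rintro p hp
      simp at hp
      subst hp
      exact ⟨by omega, le_refl 1, hk⟩
    · refine ⟨⟨by simp, ?_, by simp, by simp⟩, ?_⟩
      · rintro p hp
        simp at hp
        rcases hp with rfl | rfl
        · exact ⟨le_refl 1, le_refl 1, hk⟩
        · exact ⟨le_refl 1, hc1, hc2⟩
      · rintro p hp
        simp at hp
        rcases hp with rfl | rfl <;> simp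

lemma ncard_S12_one (k : ℕ) (hk : 1 ≤ k) : (S12 k 1).ncard = 1 := by
  rw [S12_one k hk, Set.ncard_singleton]

lemma ncard_S12_two (k : ℕ) (hk : 1 ≤ k) : (S12 k 2).ncard = k + 1 := by
  rw [S12_two k hk]
  have hfin : ((fun c => [(1, 1), (1, c)]) '' Set.Icc 1 k).Finite :=
    (Set.finite_Icc 1 k).image _
  have hnot : [(2, 1)] ∉ (fun c => [(1, 1), (1, c)]) '' Set.Icc 1 k := by
    rintro ⟨c, -, h⟩
    simp at h
  rw [Set.ncard_insert_of_notMem hnot hfin]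
  have hinj : Function.Injective (fun c => [(1, 1), (1, c)] : ℕ → List (ℕ × ℕ)) := by
    intro a b h
    simpa using h
  rw [Set.ncard_image_of_injective _ hinj]
  rw [show (Set.Icc 1 k) = ↑(Finset.Icc 1 k) by simp, Set.ncard_coe_finset, Nat.card_Icc]
  omega

lemma append_mem {k m : ℕ} {L : List (ℕ × ℕ)} (hL : L ∈ S12 k m) {a c : ℕ}
    (ha : a = 1 ∨ a = 2) (hc1 : 1 ≤ c) (hc2 : c ≤ k) : L ++ [(a, c)] ∈ S12 k (m + a) := by
  obtain ⟨⟨hne, hparts, hhead, hsum⟩, h12⟩ := hL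
  refine ⟨⟨by simp, ?_, ?_, ?_⟩, ?_⟩
  · intro p hp
    rcases List.mem_append.1 hp with h | h
    · exact hparts p h
    · simp at h
      subst h
      exact ⟨by omega, hc1, hc2⟩
  · cases L with
    | nil => exact absurd rfl hne
    | cons x t => simpa using hhead
  · simp only [List.map_append, List.sum_append, List.map_cons, List.map_nil,
      List.sum_cons, List.sum_nil]
    omega
  · intro p hp
    rcases List.mem_append.1 hp with h | h
    · exact h12 p h
    · simp at h
      subst h
      exact ha

lemma card_rec (k n : ℕ) (hn : 3 ≤ n) :
    (S12 k n).ncard = k * (S12 k (n - 1)).ncard + k * (S12 k (n - 2)).ncard := by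
  classical
  have h1 : n - 1 + 1 = n := by omega
  have h2 : n - 2 + 2 = n := by omega
  let f : (↥(S12 k (n - 1)) × Fin k) ⊕ (↥(S12 k (n - 2)) × Fin k) → ↥(S12 k n) :=
    fun x => match x with
    | .inl (⟨L, hL⟩, c) =>
        ⟨L ++ [(1, c.1 + 1)], h1 ▸ append_mem hL (Or.inl rfl) (by omega) (by omega)⟩
    | .inr (⟨L, hL⟩, c) =>
        ⟨L ++ [(2, c.1 + 1)], h2 ▸ append_mem hL (Or.inr rfl) (by omega) (by omega)⟩
  have hbij : Function.Bijective f := by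
    constructor
    · rintro (⟨⟨L, hL⟩, c⟩ | ⟨⟨L, hL⟩, c⟩) (⟨⟨M, hM⟩, d⟩ | ⟨⟨M, hM⟩, d⟩) h <;>
        simp only [f, Subtype.mk.injEq] at h <;>
        obtain ⟨hLM, hpair⟩ := List.append_inj' h rfl
      · simp only [List.cons.injEq, Prod.mk.injEq] at hpair
        have : c = d := Fin.ext (by omega)
        subst this
        subst hLM
        rfl
      · simp at hpair
      · simp at hpair
      · simp only [List.cons.injEq, Prod.mk.injEq] at hpair
        have : c = d := Fin.ext (by omega)
        subst this
        subst hLM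
        rfl
    · rintro ⟨M, hM⟩
      obtain ⟨⟨hne, hparts, hhead, hsum⟩, h12⟩ := hM
      have hlen2 : 2 ≤ M.length := by
        by_contra hcon
        have hsle : (M.map Prod.fst).sum ≤ 2 * M.length := by
          have := sum_le_two_mul (M.map Prod.fst) ?_
          · simpa using this
          · intro x hx
            obtain ⟨p, hp, rfl⟩ := List.mem_map.1 hx
            rcases h12 p hp with h | h <;> omega
        have : M.length ≥ 1 := List.length_pos_iff.2 hne
        omega
      set x := M.getLast hne with hxdef
      set L := M.dropLast with hLdef
      have hML : L ++ [x] = M := List.dropLast_append_getLast hne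
      have hLne : L ≠ [] := by
        have : L.length = M.length - 1 := by simp [hLdef]
        intro hcon
        rw [hcon] at this
        simp at this
        omega
      have hxmem : x ∈ M := List.getLast_mem hne
      have hx12 := h12 x hxmem
      have hx2 := (hparts x hxmem).2
      have hLmem : L ∈ S12 k (n - x.1) := by
        refine ⟨⟨hLne, ?_, ?_, ?_⟩, ?_⟩
        · intro p hp
          exact hparts p ((List.dropLast_sublist M).subset hp)
        · obtain ⟨y, t, hyt⟩ := List.exists_cons_of_ne_nil hLne
          rw [← hML, hyt] at hhead
          rw [hyt]
          simpa using hhead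
        · rw [← hML] at hsum
          simp only [List.map_append, List.sum_append, List.map_cons, List.map_nil,
            List.sum_cons, List.sum_nil] at hsum
          omega
        · intro p hp
          exact h12 p ((List.dropLast_sublist M).subset hp)
      rcases hx12 with hx1 | hx1
      · have hLmem' : L ∈ S12 k (n - 1) := by rwa [hx1] at hLmem
        refine ⟨.inl (⟨L, hLmem'⟩, ⟨x.2 - 1, by omega⟩), ?_⟩
        simp only [f]
        apply Subtype.ext
        simp only
        rw [← hML]
        congr 1
        have : (1, x.2 - 1 + 1) = x := by
          obtain ⟨x1, x2⟩ := x
          simp only [Prod.mk.injEq]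
          simp only at hx1
          simp only at hx2
          omega
        rw [this]
      · have hLmem' : L ∈ S12 k (n - 2) := by rwa [hx1] at hLmem
        refine ⟨.inr (⟨L, hLmem'⟩, ⟨x.2 - 1, by omega⟩), ?_⟩
        simp only [f]
        apply Subtype.ext
        simp only
        rw [← hML]
        congr 1
        have : (2, x.2 - 1 + 1) = x := by
          obtain ⟨x1, x2⟩ := x
          simp only [Prod.mk.injEq]
          simp only at hx1
          simp only at hx2
          omega
        rw [this]
  have hcard := Nat.card_eq_of_bijective f hbij
  rw [Nat.card_sum, Nat.card_prod, Nat.card_prod] at hcard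
  simp only [Nat.card_eq_fintype_card, Fintype.card_fin] at hcard
  rw [Nat.card_coe_set_eq, Nat.card_coe_set_eq, Nat.card_coe_set_eq] at hcard
  rw [← hcard]
  ring

theorem stmt11 (k : ℕ) (hk : 1 ≤ k) :
    c12 k 1 = 1 ∧ c12 k 2 = k + 1 ∧
    ∀ n, 3 ≤ n → c12 k n = k * c12 k (n - 1) + k * c12 k (n - 2) := by
  refine ⟨?_, ?_, ?_⟩
  · rw [c12, c12_eq, ncard_S12_one k hk]
  · rw [c12, c12_eq, ncard_S12_two k hk]
  · intro n hn
    rw [c12, c12, c12, c12_eq, c12_eq, c12_eq]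
    exact card_rec k n hn
end

section
/- The number c^k_odd(n) of k-compositions of n whose parts are all odd satisfies c^k_odd(1)=1, c^k_odd(2)=k, and c^k_odd(n) = k·c^k_odd(n−1) + c^k_odd(n−2) for n ≥ 3. -/
open Finset

/-- The number of `k`-compositions of `n` all of whose parts are odd. -/
noncomputable def coddk (k n : ℕ) : ℕ :=
  Nat.card {L : List (ℕ × ℕ) // L ∈ ColoredComp k n ∧ ∀ p ∈ L, Odd p.1}

def Sodd (k n : ℕ) : Set (List (ℕ × ℕ)) :=
  {L | L ∈ ColoredComp k n ∧ ∀ p ∈ L, Odd p.1}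

lemma coddk_eq (k n : ℕ) : coddk k n = Nat.card ↥(Sodd k n) := rfl

lemma mem_Sodd {k n : ℕ} {L : List (ℕ × ℕ)} :
    L ∈ Sodd k n ↔ L ≠ [] ∧ (∀ p ∈ L, 1 ≤ p.1 ∧ 1 ≤ p.2 ∧ p.2 ≤ k) ∧ L.head!.2 = 1 ∧
      (L.map Prod.fst).sum = n ∧ ∀ p ∈ L, Odd p.1 := by
  constructor
  · rintro ⟨⟨a, b, c, d⟩, e⟩; exact ⟨a, b, c, d, e⟩
  · rintro ⟨a, b, c, d, e⟩; exact ⟨⟨a, b, c, d⟩, e⟩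

/-- Inverse map for the recurrence bijection. -/
def Gmap : (ℕ × List (ℕ × ℕ)) ⊕ List (ℕ × ℕ) → List (ℕ × ℕ)
  | .inl (m, q :: T) => (1, 1) :: (q.1, m) :: T
  | .inl (_, []) => []
  | .inr (q :: T) => (q.1 + 2, q.2) :: T
  | .inr [] => []

lemma memG_inl {k n m : ℕ} {M : List (ℕ × ℕ)} (hk : 1 ≤ k) (hn : 3 ≤ n)
    (hm : 1 ≤ m ∧ m ≤ k) (hM : M ∈ Sodd k (n - 1)) :
    Gmap (.inl (m, M)) ∈ Sodd k n := by
  rcases mem_Sodd.1 hM with ⟨hne, hval, hhead, hsum, hodd⟩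
  rcases M with _ | ⟨q, T⟩
  · exact absurd rfl hne
  show ((1, 1) :: (q.1, m) :: T) ∈ Sodd k n
  simp only [List.head!_cons] at hhead
  simp only [List.map_cons, List.sum_cons] at hsum
  rw [mem_Sodd]
  refine ⟨by simp, ?_, by simp, ?_, ?_⟩
  · intro p hp
    simp only [List.mem_cons] at hp
    rcases hp with rfl | rfl | hp
    · exact ⟨le_refl 1, le_refl 1, hk⟩
    · exact ⟨(hval q (by simp)).1, hm.1, hm.2⟩
    · exact hval p (by simp [hp])
  · simp only [List.map_cons, List.sum_cons]
    omega
  · intro p hp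
    simp only [List.mem_cons] at hp
    rcases hp with rfl | rfl | hp
    · exact odd_one
    · exact hodd q (by simp)
    · exact hodd p (by simp [hp])

lemma memG_inr {k n : ℕ} {N : List (ℕ × ℕ)} (hn : 3 ≤ n)
    (hN : N ∈ Sodd k (n - 2)) :
    Gmap (.inr N) ∈ Sodd k n := by
  rcases mem_Sodd.1 hN with ⟨hne, hval, hhead, hsum, hodd⟩
  rcases N with _ | ⟨q, T⟩
  · exact absurd rfl hne
  show ((q.1 + 2, q.2) :: T) ∈ Sodd k n
  simp only [List.head!_cons] at hhead
  simp only [List.map_cons, List.sum_cons] at hsum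
  rw [mem_Sodd]
  refine ⟨by simp, ?_, by simpa using hhead, ?_, ?_⟩
  · intro p hp
    simp only [List.mem_cons] at hp
    rcases hp with rfl | hp
    · have := hval q (by simp)
      exact ⟨by omega, this.2.1, this.2.2⟩
    · exact hval p (by simp [hp])
  · simp only [List.map_cons, List.sum_cons]
    omega
  · intro p hp
    simp only [List.mem_cons] at hp
    rcases hp with rfl | hp
    · obtain ⟨j, hj⟩ := hodd q (by simp)
      exact ⟨j + 1, by omega⟩
    · exact hodd p (by simp [hp])

/-- The bundled bijection from `({1..k} × Sodd k (n-1)) ⊕ Sodd k (n-2)` to `Sodd k n`. -/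
noncomputable def Gfun (k n : ℕ) (hk : 1 ≤ k) (hn : 3 ≤ n) :
    ({m : ℕ // 1 ≤ m ∧ m ≤ k} × ↥(Sodd k (n - 1))) ⊕ ↥(Sodd k (n - 2)) → ↥(Sodd k n) :=
  fun b => match b with
  | .inl (m, M) => ⟨Gmap (.inl (m.1, M.1)), memG_inl hk hn m.2 M.2⟩
  | .inr N => ⟨Gmap (.inr N.1), memG_inr hn N.2⟩

lemma Gfun_inj (k n : ℕ) (hk : 1 ≤ k) (hn : 3 ≤ n) :
    Function.Injective (Gfun k n hk hn) := by
  rintro (⟨⟨m, hm⟩, ⟨M, hM⟩⟩ | ⟨N, hN⟩) (⟨⟨m', hm'⟩, ⟨M', hM'⟩⟩ | ⟨N', hN'⟩) h <;>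
    simp only [Gfun, Subtype.mk.injEq] at h
  · -- inl inl
    rcases mem_Sodd.1 hM with ⟨hne, -, hhead, -, -⟩
    rcases mem_Sodd.1 hM' with ⟨hne', -, hhead', -, -⟩
    rcases M with _ | ⟨q, T⟩; · exact absurd rfl hne
    rcases M' with _ | ⟨q', T'⟩; · exact absurd rfl hne'
    simp only [List.head!_cons] at hhead hhead'
    simp only [Gmap, List.cons.injEq, Prod.mk.injEq] at h
    obtain ⟨-, ⟨h1, h2⟩, h3⟩ := h
    have hq : q = q' := Prod.ext h1 (hhead.trans hhead'.symm)
    simp [hq, h2, h3]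
  · -- inl inr
    rcases mem_Sodd.1 hM with ⟨hne, -, -, -, -⟩
    rcases M with _ | ⟨q, T⟩; · exact absurd rfl hne
    rcases mem_Sodd.1 hN' with ⟨hne', -, -, -, -⟩
    rcases N' with _ | ⟨q', T'⟩; · exact absurd rfl hne'
    simp only [Gmap, List.cons.injEq, Prod.mk.injEq] at h
    omega
  · -- inr inl
    rcases mem_Sodd.1 hN with ⟨hne, -, -, -, -⟩
    rcases N with _ | ⟨q, T⟩; · exact absurd rfl hne
    rcases mem_Sodd.1 hM' with ⟨hne', -, -, -, -⟩
    rcases M' with _ | ⟨q', T'⟩; · exact absurd rfl hne'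
    simp only [Gmap, List.cons.injEq, Prod.mk.injEq] at h
    omega
  · -- inr inr
    rcases mem_Sodd.1 hN with ⟨hne, -, -, -, -⟩
    rcases N with _ | ⟨q, T⟩; · exact absurd rfl hne
    rcases mem_Sodd.1 hN' with ⟨hne', -, -, -, -⟩
    rcases N' with _ | ⟨q', T'⟩; · exact absurd rfl hne'
    simp only [Gmap, List.cons.injEq, Prod.mk.injEq] at h
    obtain ⟨⟨h1, h2⟩, h3⟩ := h
    have hq : q = q' := Prod.ext (by omega) h2
    simp [hq, h3]

lemma Gfun_surj (k n : ℕ) (hk : 1 ≤ k) (hn : 3 ≤ n) :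
    Function.Surjective (Gfun k n hk hn) := by
  rintro ⟨L, hL⟩
  rcases mem_Sodd.1 hL with ⟨hne, hval, hhead, hsum, hodd⟩
  rcases L with _ | ⟨p, T⟩; · exact absurd rfl hne
  simp only [List.head!_cons] at hhead
  simp only [List.map_cons, List.sum_cons] at hsum
  by_cases hp : p.1 = 1
  · -- first part is 1 : strip it, record the color of the second part
    have hT : T ≠ [] := by
      rintro rfl
      simp at hsum; omega
    rcases T with _ | ⟨q, T'⟩; · exact absurd rfl hT
    have hqmem := hval q (by simp)
    have hM : ((q.1, 1) :: T') ∈ Sodd k (n - 1) := by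
      rw [mem_Sodd]
      simp only [List.map_cons, List.sum_cons] at hsum ⊢
      refine ⟨by simp, ?_, by simp, by omega, ?_⟩
      · intro r hr
        simp only [List.mem_cons] at hr
        rcases hr with rfl | hr
        · exact ⟨hqmem.1, le_refl 1, hk⟩
        · exact hval r (by simp [hr])
      · intro r hr
        simp only [List.mem_cons] at hr
        rcases hr with rfl | hr
        · exact hodd q (by simp)
        · exact hodd r (by simp [hr])
    refine ⟨.inl (⟨q.2, hqmem.2.1, hqmem.2.2⟩, ⟨(q.1, 1) :: T', hM⟩), ?_⟩
    simp only [Gfun, Gmap]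
    apply Subtype.ext
    have : p = (1, 1) := Prod.ext hp hhead
    simp [this]
  · -- first part is ≥ 3 : subtract 2
    have hp3 : 3 ≤ p.1 := by
      obtain ⟨j, hj⟩ := hodd p (by simp)
      omega
    have hN : ((p.1 - 2, p.2) :: T) ∈ Sodd k (n - 2) := by
      rw [mem_Sodd]
      simp only [List.map_cons, List.sum_cons]
      refine ⟨by simp, ?_, by simpa using hhead, by omega, ?_⟩
      · intro r hr
        simp only [List.mem_cons] at hr
        rcases hr with rfl | hr
        · have := hval p (by simp)
          exact ⟨by omega, this.2.1, this.2.2⟩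
        · exact hval r (by simp [hr])
      · intro r hr
        simp only [List.mem_cons] at hr
        rcases hr with rfl | hr
        · obtain ⟨j, hj⟩ := hodd p (by simp)
          exact ⟨j - 1, by omega⟩
        · exact hodd r (by simp [hr])
    refine ⟨.inr ⟨(p.1 - 2, p.2) :: T, hN⟩, ?_⟩
    simp only [Gfun, Gmap]
    apply Subtype.ext
    show (p.1 - 2 + 2, p.2) :: T = p :: T
    have : p.1 - 2 + 2 = p.1 := by omega
    rw [this]

lemma Sodd_one (k : ℕ) (hk : 1 ≤ k) : Sodd k 1 = {[(1, 1)]} := by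
  ext L
  constructor
  · intro hL
    rcases mem_Sodd.1 hL with ⟨hne, hval, hhead, hsum, hodd⟩
    rcases L with _ | ⟨p, T⟩; · exact absurd rfl hne
    simp only [List.head!_cons] at hhead
    simp only [List.map_cons, List.sum_cons] at hsum
    have hp1 := (hval p (by simp)).1
    have hT : T = [] := by
      rcases T with _ | ⟨q, T'⟩
      · rfl
      · have := (hval q (by simp)).1
        simp only [List.map_cons, List.sum_cons] at hsum
        omega
    subst hT
    simp only [List.map_nil, List.sum_nil] at hsum
    have : p = (1, 1) := Prod.ext (by omega) hhead
    simp [this]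
  · intro hL
    simp only [Set.mem_singleton_iff] at hL
    subst hL
    rw [mem_Sodd]
    refine ⟨by simp, ?_, by simp, by simp, ?_⟩
    · intro p hp; simp only [List.mem_singleton] at hp; subst hp
      exact ⟨le_refl 1, le_refl 1, hk⟩
    · intro p hp; simp only [List.mem_singleton] at hp; subst hp
      exact odd_one

lemma Sodd_two (k : ℕ) (hk : 1 ≤ k) :
    Sodd k 2 = (fun m => [(1, 1), (1, m)]) '' (Set.Icc 1 k) := by
  ext L
  constructor
  · intro hL
    rcases mem_Sodd.1 hL with ⟨hne, hval, hhead, hsum, hodd⟩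
    rcases L with _ | ⟨p, T⟩; · exact absurd rfl hne
    simp only [List.head!_cons] at hhead
    simp only [List.map_cons, List.sum_cons] at hsum
    have hp1 : p.1 = 1 := by
      obtain ⟨j, hj⟩ := hodd p (by simp)
      omega
    rcases T with _ | ⟨q, T'⟩
    · simp only [List.map_nil, List.sum_nil] at hsum; omega
    have hq1 := (hval q (by simp)).1
    simp only [List.map_cons, List.sum_cons] at hsum
    have hT' : T' = [] := by
      rcases T' with _ | ⟨r, T''⟩
      · rfl
      · have := (hval r (by simp)).1
        simp only [List.map_cons, List.sum_cons] at hsum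
        omega
    subst hT'
    simp only [List.map_nil, List.sum_nil] at hsum
    have hq : q = (1, q.2) := Prod.ext (by omega) rfl
    have hp : p = (1, 1) := Prod.ext hp1 hhead
    have hq2 := (hval q (by simp)).2
    exact ⟨q.2, Set.mem_Icc.2 ⟨hq2.1, hq2.2⟩, by rw [hp, hq]⟩
  · rintro ⟨m, hm, rfl⟩
    rw [Set.mem_Icc] at hm
    rw [mem_Sodd]
    refine ⟨by simp, ?_, by simp, by simp, ?_⟩
    · intro p hp
      simp only [List.mem_cons, List.mem_singleton] at hp
      rcases hp with rfl | rfl | h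
      · exact ⟨le_refl 1, le_refl 1, hk⟩
      · exact ⟨le_refl 1, hm.1, hm.2⟩
      · simp at h
    · intro p hp
      simp only [List.mem_cons, List.mem_singleton] at hp
      rcases hp with rfl | rfl | h
      · exact odd_one
      · exact odd_one
      · simp at h

lemma Sodd_zero (k : ℕ) : Sodd k 0 = ∅ := by
  ext L
  simp only [Set.mem_empty_iff_false, iff_false]
  intro hL
  rcases mem_Sodd.1 hL with ⟨hne, hval, -, hsum, -⟩
  rcases L with _ | ⟨p, T⟩; · exact absurd rfl hne
  simp only [List.map_cons, List.sum_cons] at hsum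
  have := (hval p (by simp)).1
  omega

instance finColors (k : ℕ) : Finite {m : ℕ // 1 ≤ m ∧ m ≤ k} :=
  Finite.of_injective (fun x => (⟨x.1, by omega⟩ : Fin (k + 1)))
    (by rintro ⟨a, ha⟩ ⟨b, hb⟩ h; simpa [Fin.ext_iff] using h)

lemma finite_Sodd (k : ℕ) (hk : 1 ≤ k) : ∀ n, Finite ↥(Sodd k n) := by
  intro n
  induction n using Nat.strong_induction_on with
  | _ n ih =>
    match n, ih with
    | 0, _ => rw [Sodd_zero]; exact Set.finite_empty.to_subtype
    | 1, _ => rw [Sodd_one k hk]; exact (Set.finite_singleton _).to_subtype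
    | 2, _ => rw [Sodd_two k hk]; exact ((Set.finite_Icc 1 k).image _).to_subtype
    | (n + 3), ih =>
      have h1 : Finite ↥(Sodd k (n + 3 - 1)) := ih _ (by omega)
      have h2 : Finite ↥(Sodd k (n + 3 - 2)) := ih _ (by omega)
      exact Finite.of_surjective _ (Gfun_surj k (n + 3) hk (by omega))

theorem stmt12 (k : ℕ) (hk : 1 ≤ k) :
    coddk k 1 = 1 ∧ coddk k 2 = k ∧
    ∀ n, 3 ≤ n → coddk k n = k * coddk k (n - 1) + coddk k (n - 2) := by
  refine ⟨?_, ?_, ?_⟩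
  · rw [coddk_eq, Sodd_one k hk, Nat.card_coe_set_eq, Set.ncard_singleton]
  · rw [coddk_eq, Sodd_two k hk, Nat.card_coe_set_eq,
      Set.ncard_image_of_injective _ (by intro a b h; simpa using h)]
    rw [← Finset.coe_Icc, Set.ncard_coe_finset]
    simp
  · intro n hn
    have h1 : Finite ↥(Sodd k (n - 1)) := finite_Sodd k hk _
    have h2 : Finite ↥(Sodd k (n - 2)) := finite_Sodd k hk _
    have key := Nat.card_eq_of_bijective (Gfun k n hk hn)
      ⟨Gfun_inj k n hk hn, Gfun_surj k n hk hn⟩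
    rw [coddk_eq, coddk_eq, coddk_eq, ← key, Nat.card_sum, Nat.card_prod]
    congr 1
    congr 1
    have : Nat.card {m : ℕ // 1 ≤ m ∧ m ≤ k} = Nat.card ↥(Set.Icc 1 k) := rfl
    rw [this, Nat.card_coe_set_eq, ← Finset.coe_Icc, Set.ncard_coe_finset]
    simp
end

section
/- The number c^k_1̂(n) of k-compositions of n with no part equal to 1 satisfies c^k_1̂(2)=1, c^k_1̂(3)=1, and c^k_1̂(n) = c^k_1̂(n−1) + k·c^k_1̂(n−2) for n ≥ 4. -/
open Finset

/-- The number of `k`-compositions of `n` with no part equal to `1`. -/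
noncomputable def cones (k n : ℕ) : ℕ :=
  Nat.card {L : List (ℕ × ℕ) // L ∈ ColoredComp k n ∧ ∀ p ∈ L, 2 ≤ p.1}


/-! ### auxiliary development -/


def CCs (k n : ℕ) : Set (List (ℕ × ℕ)) :=
  {L | L ∈ ColoredComp k n ∧ ∀ p ∈ L, 2 ≤ p.1}

def DDs (k n : ℕ) : Set (List (ℕ × ℕ)) :=
  {L | L ≠ [] ∧ (∀ p ∈ L, 2 ≤ p.1 ∧ 1 ≤ p.2 ∧ p.2 ≤ k) ∧ (L.map Prod.fst).sum = n}

lemma mem_CCs {k n : ℕ} {L : List (ℕ × ℕ)} :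
    L ∈ CCs k n ↔ L ≠ [] ∧ (∀ p ∈ L, 2 ≤ p.1 ∧ 1 ≤ p.2 ∧ p.2 ≤ k) ∧ L.head!.2 = 1 ∧
      (L.map Prod.fst).sum = n := by
  simp only [CCs, ColoredComp, Set.mem_setOf_eq]
  constructor
  · rintro ⟨⟨h1, h2, h3, h4⟩, h5⟩
    exact ⟨h1, fun p hp => ⟨h5 p hp, (h2 p hp).2.1, (h2 p hp).2.2⟩, h3, h4⟩
  · rintro ⟨h1, h2, h3, h4⟩
    exact ⟨⟨h1, fun p hp => ⟨le_trans one_le_two (h2 p hp).1, (h2 p hp).2.1, (h2 p hp).2.2⟩,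
      h3, h4⟩, fun p hp => (h2 p hp).1⟩

lemma cones_eq (k n : ℕ) : cones k n = Nat.card ↥(CCs k n) := rfl

lemma CCs_two {k : ℕ} (hk : 1 ≤ k) : CCs k 2 = {[(2, 1)]} := by
  ext L
  rw [mem_CCs]
  constructor
  · rintro ⟨h1, h2, h3, h4⟩
    obtain _ | ⟨⟨a, b⟩, T⟩ := L
    · exact absurd rfl h1
    · simp only [List.head!_cons] at h3
      obtain _ | ⟨⟨c, d⟩, T'⟩ := T
      · simp only [List.map_cons, List.map_nil, List.sum_cons, List.sum_nil] at h4
        have := (h2 (a, b) (by simp)).1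
        simp only [Set.mem_singleton_iff]
        have : a = 2 := by omega
        simp_all
      · have ha := (h2 (a, b) (by simp)).1
        have hc := (h2 (c, d) (by simp)).1
        simp only [List.map_cons, List.sum_cons] at h4
        simp only at ha hc
        omega
  · rintro rfl
    refine ⟨by simp, ?_, by simp, by simp⟩
    intro p hp
    simp only [List.mem_singleton] at hp
    subst hp
    exact ⟨le_refl 2, le_refl 1, hk⟩

lemma CCs_three {k : ℕ} (hk : 1 ≤ k) : CCs k 3 = {[(3, 1)]} := by
  ext L
  rw [mem_CCs]
  constructor
  · rintro ⟨h1, h2, h3, h4⟩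
    obtain _ | ⟨⟨a, b⟩, T⟩ := L
    · exact absurd rfl h1
    · simp only [List.head!_cons] at h3
      obtain _ | ⟨⟨c, d⟩, T'⟩ := T
      · simp only [List.map_cons, List.map_nil, List.sum_cons, List.sum_nil] at h4
        simp only [Set.mem_singleton_iff]
        have : a = 3 := by omega
        simp_all
      · have ha := (h2 (a, b) (by simp)).1
        have hc := (h2 (c, d) (by simp)).1
        simp only [List.map_cons, List.sum_cons] at h4
        simp only at ha hc
        have hs : 0 ≤ (T'.map Prod.fst).sum := Nat.zero_le _
        omega
  · rintro rfl
    refine ⟨by simp, ?_, by simp, by simp⟩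
    intro p hp
    simp only [List.mem_singleton] at hp
    subst hp
    exact ⟨by norm_num, le_refl 1, hk⟩

lemma CCs_small {k n : ℕ} (hn : n ≤ 1) : CCs k n = ∅ := by
  ext L
  rw [mem_CCs]
  simp only [Set.mem_empty_iff_false, iff_false]
  rintro ⟨h1, h2, h3, h4⟩
  obtain _ | ⟨⟨a, b⟩, T⟩ := L
  · exact absurd rfl h1
  · have := (h2 (a, b) (by simp)).1
    simp only [List.map_cons, List.sum_cons] at h4
    simp only at this
    omega

/-! head-splitting -/

def Abig (k n : ℕ) : Set (List (ℕ × ℕ)) := {L | L ∈ CCs k n ∧ 3 ≤ L.head!.1}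
def Bsm (k n : ℕ) : Set (List (ℕ × ℕ)) := {L | L ∈ CCs k n ∧ L.head!.1 = 2}

lemma CCs_split (k n : ℕ) : CCs k n = Abig k n ∪ Bsm k n := by
  ext L
  constructor
  · intro h
    obtain ⟨h1, h2, h3, h4⟩ := mem_CCs.mp h
    have hm : L.head! ∈ L := List.head!_mem_self h1
    have := (h2 _ hm).1
    rcases Nat.lt_or_ge L.head!.1 3 with hlt | hge
    · exact Or.inr ⟨h, by omega⟩
    · exact Or.inl ⟨h, hge⟩
  · rintro (⟨h, _⟩ | ⟨h, _⟩) <;> exact h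

lemma disj_AB (k n : ℕ) : Disjoint (Abig k n) (Bsm k n) := by
  rw [Set.disjoint_left]
  rintro L ⟨_, h3⟩ ⟨_, h2⟩
  omega

def decHead : List (ℕ × ℕ) → List (ℕ × ℕ)
  | [] => []
  | (c, m) :: T => (c - 1, m) :: T

def incHead : List (ℕ × ℕ) → List (ℕ × ℕ)
  | [] => []
  | (c, m) :: T => (c + 1, m) :: T

def setColor (j : ℕ) : List (ℕ × ℕ) → List (ℕ × ℕ)
  | [] => []
  | (c, _) :: T => (c, j) :: T

lemma decHead_mem {k n : ℕ} {L : List (ℕ × ℕ)} (h : L ∈ Abig k n) :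
    decHead L ∈ CCs k (n - 1) := by
  obtain ⟨hC, hh⟩ := h
  obtain ⟨h1, h2, h3, h4⟩ := mem_CCs.mp hC
  obtain _ | ⟨⟨a, b⟩, T⟩ := L
  · exact absurd rfl h1
  · simp only [List.head!_cons] at h3 hh
    simp only [List.map_cons, List.sum_cons] at h4
    rw [mem_CCs]
    refine ⟨by simp [decHead], ?_, by simp [decHead, h3], ?_⟩
    · intro p hp
      simp only [decHead, List.mem_cons] at hp
      rcases hp with rfl | hp
      · have := h2 (a, b) (by simp)
        exact ⟨by omega, this.2.1, this.2.2⟩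
      · exact h2 p (List.mem_cons_of_mem _ hp)
    · simp only [decHead, List.map_cons, List.sum_cons]
      omega

lemma incHead_mem {k n : ℕ} {M : List (ℕ × ℕ)} (hn : 2 ≤ n) (h : M ∈ CCs k (n - 1)) :
    incHead M ∈ Abig k n := by
  obtain ⟨h1, h2, h3, h4⟩ := mem_CCs.mp h
  obtain _ | ⟨⟨a, b⟩, T⟩ := M
  · exact absurd rfl h1
  · simp only [List.head!_cons] at h3
    simp only [List.map_cons, List.sum_cons] at h4
    have ha := (h2 (a, b) (by simp)).1
    simp only at ha
    constructor
    · rw [mem_CCs]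
      refine ⟨by simp [incHead], ?_, by simp [incHead, h3], ?_⟩
      · intro p hp
        simp only [incHead, List.mem_cons] at hp
        rcases hp with rfl | hp
        · have := h2 (a, b) (by simp)
          exact ⟨by omega, this.2.1, this.2.2⟩
        · exact h2 p (List.mem_cons_of_mem _ hp)
      · simp only [incHead, List.map_cons, List.sum_cons]
        omega
    · simp only [incHead, List.head!_cons]
      omega

lemma inc_dec {L : List (ℕ × ℕ)} (h : ∀ p ∈ L, 2 ≤ p.1) : incHead (decHead L) = L := by
  obtain _ | ⟨⟨a, b⟩, T⟩ := L
  · rfl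
  · have h2a : 2 ≤ a := h (a, b) (by simp)
    simp only [decHead, incHead]
    have ha : a - 1 + 1 = a := by omega
    rw [ha]

lemma dec_inc (M : List (ℕ × ℕ)) : decHead (incHead M) = M := by
  obtain _ | ⟨⟨a, b⟩, T⟩ := M
  · rfl
  · simp [decHead, incHead]

noncomputable def eqvA (k n : ℕ) (hn : 2 ≤ n) : ↥(Abig k n) ≃ ↥(CCs k (n - 1)) where
  toFun L := ⟨decHead L.1, decHead_mem L.2⟩
  invFun M := ⟨incHead M.1, incHead_mem hn M.2⟩
  left_inv L := Subtype.ext (inc_dec fun p hp => (mem_CCs.mp L.2.1).2.1 p hp |>.1)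
  right_inv M := Subtype.ext (dec_inc M.1)

lemma tail_mem {k n : ℕ} {L : List (ℕ × ℕ)} (hn : 4 ≤ n) (h : L ∈ Bsm k n) :
    L.tail ∈ DDs k (n - 2) := by
  obtain ⟨hC, hh⟩ := h
  obtain ⟨h1, h2, h3, h4⟩ := mem_CCs.mp hC
  obtain _ | ⟨⟨a, b⟩, T⟩ := L
  · exact absurd rfl h1
  · simp only [List.head!_cons] at hh
    have ha : a = 2 := hh
    simp only [List.map_cons, List.sum_cons] at h4
    refine ⟨?_, fun p hp => h2 p (List.mem_cons_of_mem _ hp), ?_⟩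
    · rintro hT
      simp only [List.tail_cons] at hT
      subst hT
      simp only [List.map_nil, List.sum_nil] at h4
      omega
    · simp only [List.tail_cons]
      omega

lemma cons21_mem {k n : ℕ} (hk : 1 ≤ k) (hn : 4 ≤ n) {T : List (ℕ × ℕ)}
    (h : T ∈ DDs k (n - 2)) : ((2, 1) :: T) ∈ Bsm k n := by
  obtain ⟨h1, h2, h3⟩ := h
  constructor
  · rw [mem_CCs]
    refine ⟨by simp, ?_, by simp, ?_⟩
    · intro p hp
      simp only [List.mem_cons] at hp
      rcases hp with rfl | hp
      · exact ⟨le_refl 2, le_refl 1, hk⟩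
      · exact h2 p hp
    · simp only [List.map_cons, List.sum_cons, h3]
      omega
  · simp [List.head!_cons]

noncomputable def eqvB (k n : ℕ) (hk : 1 ≤ k) (hn : 4 ≤ n) :
    ↥(Bsm k n) ≃ ↥(DDs k (n - 2)) where
  toFun L := ⟨L.1.tail, tail_mem hn L.2⟩
  invFun T := ⟨(2, 1) :: T.1, cons21_mem hk hn T.2⟩
  left_inv L := by
    apply Subtype.ext
    obtain ⟨L, hC, hh⟩ := L
    have h1 : L ≠ [] := (mem_CCs.mp hC).1
    have h3 : L.head!.2 = 1 := (mem_CCs.mp hC).2.2.1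
    have : L.head! = (2, 1) := Prod.ext hh h3
    calc (2, 1) :: L.tail = L.head! :: L.tail := by rw [this]
      _ = L := List.cons_head!_tail h1
  right_inv T := Subtype.ext (by simp)

/-! color equiv -/

lemma setColor_mem1 {k n : ℕ} (hk : 1 ≤ k) {L : List (ℕ × ℕ)} (h : L ∈ DDs k n) :
    setColor 1 L ∈ CCs k n := by
  obtain ⟨h1, h2, h3⟩ := h
  obtain _ | ⟨⟨a, b⟩, T⟩ := L
  · exact absurd rfl h1
  · rw [mem_CCs]
    refine ⟨by simp [setColor], ?_, by simp [setColor], ?_⟩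
    · intro p hp
      simp only [setColor, List.mem_cons] at hp
      rcases hp with rfl | hp
      · exact ⟨(h2 (a, b) (by simp)).1, le_refl 1, hk⟩
      · exact h2 p (List.mem_cons_of_mem _ hp)
    · simpa [setColor] using h3

lemma setColor_mem2 {k n : ℕ} {M : List (ℕ × ℕ)} (i : Fin k) (h : M ∈ CCs k n) :
    setColor ((i : ℕ) + 1) M ∈ DDs k n := by
  obtain ⟨h1, h2, h3, h4⟩ := mem_CCs.mp h
  obtain _ | ⟨⟨a, b⟩, T⟩ := M
  · exact absurd rfl h1
  · refine ⟨by simp [setColor], ?_, ?_⟩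
    · intro p hp
      simp only [setColor, List.mem_cons] at hp
      rcases hp with rfl | hp
      · refine ⟨(h2 (a, b) (by simp)).1, by omega, ?_⟩
        have := i.2
        omega
      · exact h2 p (List.mem_cons_of_mem _ hp)
    · simpa [setColor] using h4

noncomputable def eqvD (k n : ℕ) (hk : 1 ≤ k) : ↥(DDs k n) ≃ Fin k × ↥(CCs k n) where
  toFun L := (⟨L.1.head!.2 - 1, by
      obtain ⟨h1, h2, h3⟩ := L.2
      have hm : L.1.head! ∈ L.1 := List.head!_mem_self h1
      have := h2 _ hm
      omega⟩,
    ⟨setColor 1 L.1, setColor_mem1 hk L.2⟩)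
  invFun x := ⟨setColor ((x.1 : ℕ) + 1) x.2.1, setColor_mem2 x.1 x.2.2⟩
  left_inv L := by
    apply Subtype.ext
    obtain ⟨L, h1, h2, h3⟩ := L
    obtain _ | ⟨⟨a, b⟩, T⟩ := L
    · exact absurd rfl h1
    · have hb := (h2 (a, b) (by simp)).2.1
      simp only [List.head!_cons, setColor]
      simp only at hb
      congr 2
      omega
  right_inv x := by
    obtain ⟨i, M, hM⟩ := x
    obtain ⟨h1, h2, h3, h4⟩ := mem_CCs.mp hM
    obtain _ | ⟨⟨a, b⟩, T⟩ := M
    · exact absurd rfl h1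
    · simp only [List.head!_cons] at h3
      have hb : b = 1 := h3
      subst hb
      refine Prod.ext ?_ (Subtype.ext ?_)
      · simp only [setColor, List.head!_cons]
        apply Fin.ext
        simp
      · simp [setColor]

/-! finiteness -/

lemma CCs_finite {k : ℕ} (hk : 1 ≤ k) : ∀ n, (CCs k n).Finite := by
  intro n
  induction n using Nat.strong_induction_on with
  | _ n ih =>
    rcases Nat.lt_or_ge n 2 with h | h
    · rw [CCs_small (by omega)]; exact Set.finite_empty
    rcases Nat.lt_or_ge n 4 with h4 | h4
    · interval_cases n
      · rw [CCs_two hk]; exact Set.finite_singleton _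
      · rw [CCs_three hk]; exact Set.finite_singleton _
    · rw [CCs_split]
      have hA : (Abig k n).Finite := by
        rw [← Set.finite_coe_iff]
        have : Finite ↥(CCs k (n - 1)) := (ih (n - 1) (by omega)).to_subtype
        exact Finite.of_equiv _ (eqvA k n (by omega)).symm
      have hB : (Bsm k n).Finite := by
        rw [← Set.finite_coe_iff]
        have : Finite ↥(CCs k (n - 2)) := (ih (n - 2) (by omega)).to_subtype
        have : Finite (Fin k × ↥(CCs k (n - 2))) := inferInstance
        have : Finite ↥(DDs k (n - 2)) := Finite.of_equiv _ (eqvD k (n - 2) hk).symm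
        exact Finite.of_equiv _ (eqvB k n hk h4).symm
      exact hA.union hB

theorem stmt13 (k : ℕ) (hk : 1 ≤ k) :
    cones k 2 = 1 ∧ cones k 3 = 1 ∧
    ∀ n, 4 ≤ n → cones k n = cones k (n - 1) + k * cones k (n - 2) := by
  refine ⟨?_, ?_, ?_⟩
  · rw [cones_eq, CCs_two hk]
    simp [Nat.card_coe_set_eq]
  · rw [cones_eq, CCs_three hk]
    simp [Nat.card_coe_set_eq]
  · intro n hn
    classical
    have fin1 : Finite ↥(CCs k (n - 1)) := (CCs_finite hk (n - 1)).to_subtype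
    have fin2 : Finite ↥(CCs k (n - 2)) := (CCs_finite hk (n - 2)).to_subtype
    have finD : Finite ↥(DDs k (n - 2)) := Finite.of_equiv _ (eqvD k (n - 2) hk).symm
    have fA : Finite ↥(Abig k n) := Finite.of_equiv _ (eqvA k n (by omega)).symm
    have fB : Finite ↥(Bsm k n) := Finite.of_equiv _ (eqvB k n hk hn).symm
    rw [cones_eq, cones_eq, cones_eq]
    have hsplit : Nat.card ↥(CCs k n) = Nat.card (↥(Abig k n) ⊕ ↥(Bsm k n)) := by
      have : ↥(CCs k n) ≃ ↥(Abig k n ∪ Bsm k n) := Equiv.setCongr (CCs_split k n)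
      exact Nat.card_congr (this.trans (Equiv.Set.union (disj_AB k n)))
    rw [hsplit, Nat.card_sum, Nat.card_congr (eqvA k n (by omega)),
      Nat.card_congr ((eqvB k n hk hn).trans (eqvD k (n - 2) hk)), Nat.card_prod]
    simp
end

section
/- The generating function for the number of k-compositions of n with only odd positive parts is x/(1 − kx − x²). -/
open Finset

def Bset (k n : ℕ) : Set (List (ℕ × ℕ)) :=
  {L | L ≠ [] ∧ (∀ p ∈ L, (1 ≤ p.1 ∧ 1 ≤ p.2 ∧ p.2 ≤ k) ∧ Odd p.1) ∧
    (L.map Prod.fst).sum = n}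

def Aset (k n : ℕ) : Set (List (ℕ × ℕ)) :=
  {L | L ∈ ColoredComp k n ∧ ∀ p ∈ L, Odd p.1}

lemma mem_Aset {k n : ℕ} {L : List (ℕ × ℕ)} :
    L ∈ Aset k n ↔ L ∈ Bset k n ∧ L.head!.2 = 1 := by
  simp only [Aset, Bset, ColoredComp, Set.mem_setOf_eq]
  constructor
  · rintro ⟨⟨h1, h2, h3, h4⟩, h5⟩
    exact ⟨⟨h1, fun p hp => ⟨h2 p hp, h5 p hp⟩, h4⟩, h3⟩
  · rintro ⟨⟨h1, h2, h4⟩, h3⟩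
    exact ⟨⟨h1, fun p hp => (h2 p hp).1, h3, h4⟩, fun p hp => (h2 p hp).2⟩

lemma mem_Bset_cons {k n p c : ℕ} {T : List (ℕ × ℕ)} :
    ((p, c) :: T) ∈ Bset k n ↔
      (1 ≤ p ∧ 1 ≤ c ∧ c ≤ k) ∧ Odd p ∧ (∀ q ∈ T, (1 ≤ q.1 ∧ 1 ≤ q.2 ∧ q.2 ≤ k) ∧ Odd q.1) ∧
      p + (T.map Prod.fst).sum = n := by
  simp only [Bset, Set.mem_setOf_eq, List.map_cons, List.sum_cons, List.mem_cons,
    ne_eq, reduceCtorEq, not_false_eq_true, true_and]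
  constructor
  · rintro ⟨h2, h4⟩
    exact ⟨(h2 _ (Or.inl rfl)).1, (h2 _ (Or.inl rfl)).2, fun q hq => h2 q (Or.inr hq), h4⟩
  · rintro ⟨h1, h2, h3, h4⟩
    exact ⟨by rintro q (rfl | hq); exacts [⟨h1, h2⟩, h3 q hq], h4⟩

lemma mem_Aset_cons {k n p c : ℕ} {T : List (ℕ × ℕ)} :
    ((p, c) :: T) ∈ Aset k n ↔ ((p, c) :: T) ∈ Bset k n ∧ c = 1 := by
  rw [mem_Aset]; simp

lemma Bset_ne_nil {k n : ℕ} {L : List (ℕ × ℕ)} (h : L ∈ Bset k n) :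
    ∃ p c T, L = (p, c) :: T := by
  obtain ⟨x, T, rfl⟩ := List.exists_cons_of_ne_nil h.1
  exact ⟨x.1, x.2, T, rfl⟩

/-- recoloring map: Fin k × A n → B n -/
def f1 {k n : ℕ} (y : Fin k × ↥(Aset k n)) : ↥(Bset k n) :=
  ⟨(y.2.1.head!.1, y.1.1 + 1) :: y.2.1.tail, by
    obtain ⟨⟨i, hi⟩, ⟨L, hL⟩⟩ := y
    obtain ⟨p, c, T, rfl⟩ := Bset_ne_nil (mem_Aset.1 hL).1
    have hB := (mem_Aset.1 hL).1
    rw [mem_Bset_cons] at hB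
    simp only [List.head!_cons, List.tail_cons]
    rw [mem_Bset_cons]
    exact ⟨⟨hB.1.1, Nat.le_add_left 1 i, hi⟩, hB.2.1, hB.2.2.1, hB.2.2.2⟩⟩

lemma f1_bij {k n : ℕ} (hk : 1 ≤ k) : Function.Bijective (f1 (k := k) (n := n)) := by
  constructor
  · rintro ⟨⟨i, hi⟩, ⟨L, hL⟩⟩ ⟨⟨j, hj⟩, ⟨M, hM⟩⟩ hEq
    obtain ⟨p, c, T, rfl⟩ := Bset_ne_nil (mem_Aset.1 hL).1
    obtain ⟨q, d, S, rfl⟩ := Bset_ne_nil (mem_Aset.1 hM).1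
    have hc : c = 1 := (mem_Aset_cons.1 hL).2
    have hd : d = 1 := (mem_Aset_cons.1 hM).2
    simp only [f1, List.head!_cons, List.tail_cons, Subtype.mk.injEq, List.cons.injEq,
      Prod.mk.injEq] at hEq
    obtain ⟨⟨hpq, hij⟩, hTS⟩ := hEq
    subst hc hd hpq hTS
    simp [Nat.add_right_cancel hij]
  · rintro ⟨L, hL⟩
    obtain ⟨p, c, T, rfl⟩ := Bset_ne_nil hL
    rw [mem_Bset_cons] at hL
    have hc1 : 1 ≤ c := hL.1.2.1
    refine ⟨⟨⟨c - 1, by omega⟩, ⟨(p, 1) :: T, ?_⟩⟩, ?_⟩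
    · rw [mem_Aset_cons, mem_Bset_cons]
      exact ⟨⟨⟨hL.1.1, le_refl 1, hk⟩, hL.2.1, hL.2.2.1, hL.2.2.2⟩, rfl⟩
    · simp only [f1, List.head!_cons, List.tail_cons, Subtype.mk.injEq, List.cons.injEq,
        Prod.mk.injEq]
      exact ⟨⟨by simp, by omega⟩, by simp⟩

/-- splitting map: B (n+1) ⊕ A n → A (n+2) -/
def f2 {k n : ℕ} (hk : 1 ≤ k) (y : ↥(Bset k (n + 1)) ⊕ ↥(Aset k n)) : ↥(Aset k (n + 2)) :=
  match y with
  | Sum.inl ⟨T, hT⟩ => ⟨(1, 1) :: T, by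
      rw [mem_Aset_cons, mem_Bset_cons]
      refine ⟨⟨⟨le_refl 1, le_refl 1, hk⟩, odd_one, hT.2.1, by have := hT.2.2; omega⟩, by simp⟩⟩
  | Sum.inr ⟨M, hM⟩ => ⟨(M.head!.1 + 2, 1) :: M.tail, by
      obtain ⟨p, c, T, rfl⟩ := Bset_ne_nil (mem_Aset.1 hM).1
      rw [mem_Aset_cons, mem_Bset_cons] at hM ⊢
      simp only [List.head!_cons, List.tail_cons]
      obtain ⟨⟨h1, h2, h3, h4⟩, h5⟩ := hM
      refine ⟨⟨⟨by omega, le_refl 1, hk⟩, by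
        obtain ⟨m, hm⟩ := h2; exact ⟨m + 1, by omega⟩, h3, by omega⟩, by simp⟩⟩

lemma f2_bij {k n : ℕ} (hk : 1 ≤ k) : Function.Bijective (f2 (k := k) (n := n) hk) := by
  constructor
  · rintro (⟨T, hT⟩ | ⟨M, hM⟩) (⟨S, hS⟩ | ⟨N, hN⟩) hEq
    · simp only [f2, Subtype.mk.injEq, List.cons.injEq] at hEq
      simp [hEq.2]
    · obtain ⟨p, c, T', rfl⟩ := Bset_ne_nil (mem_Aset.1 hN).1
      have hp : 1 ≤ p := (mem_Aset.1 hN).1.2.1 _ List.mem_cons_self |>.1.1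
      simp only [f2, List.head!_cons, List.tail_cons, Subtype.mk.injEq, List.cons.injEq,
        Prod.mk.injEq] at hEq
      omega
    · obtain ⟨p, c, T', rfl⟩ := Bset_ne_nil (mem_Aset.1 hM).1
      have hp : 1 ≤ p := (mem_Aset.1 hM).1.2.1 _ List.mem_cons_self |>.1.1
      simp only [f2, List.head!_cons, List.tail_cons, Subtype.mk.injEq, List.cons.injEq,
        Prod.mk.injEq] at hEq
      omega
    · obtain ⟨p, c, T', rfl⟩ := Bset_ne_nil (mem_Aset.1 hM).1
      obtain ⟨q, d, S', rfl⟩ := Bset_ne_nil (mem_Aset.1 hN).1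
      have hc : c = 1 := (mem_Aset_cons.1 hM).2
      have hd : d = 1 := (mem_Aset_cons.1 hN).2
      simp only [f2, List.head!_cons, List.tail_cons, Subtype.mk.injEq, List.cons.injEq,
        Prod.mk.injEq] at hEq
      subst hc hd
      obtain ⟨⟨h1, -⟩, h2⟩ := hEq
      simp [Nat.add_right_cancel h1, h2]
  · rintro ⟨L, hL⟩
    obtain ⟨p, c, T, rfl⟩ := Bset_ne_nil (mem_Aset.1 hL).1
    have hc : c = 1 := (mem_Aset_cons.1 hL).2
    subst hc
    have hB := (mem_Aset_cons.1 hL).1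
    rw [mem_Bset_cons] at hB
    obtain ⟨⟨hp1, -⟩, hodd, hT, hsum⟩ := hB
    rcases eq_or_ne p 1 with rfl | hp
    · refine ⟨Sum.inl ⟨T, ?_, hT, by omega⟩, ?_⟩
      · rintro rfl; simp at hsum
      · simp [f2]
    · have hp3 : 3 ≤ p := by
        obtain ⟨m, hm⟩ := hodd; omega
      refine ⟨Sum.inr ⟨(p - 2, 1) :: T, ?_⟩, ?_⟩
      · rw [mem_Aset_cons, mem_Bset_cons]
        refine ⟨⟨⟨by omega, le_refl 1, hk⟩, ?_, hT, by omega⟩, by simp⟩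
        obtain ⟨m, hm⟩ := hodd; exact ⟨m - 1, by omega⟩
      · simp only [f2, List.head!_cons, List.tail_cons, Subtype.mk.injEq, List.cons.injEq,
          Prod.mk.injEq]
        exact ⟨⟨by omega, by simp⟩, by simp⟩

def aSeq (k : ℕ) : ℕ → ℕ
  | 0 => 0
  | 1 => 1
  | (n + 2) => k * aSeq k (n + 1) + aSeq k n

lemma Aset_zero (k : ℕ) : Aset k 0 = ∅ := by
  ext L
  simp only [Set.mem_empty_iff_false, iff_false]
  intro hL
  obtain ⟨p, c, T, rfl⟩ := Bset_ne_nil (mem_Aset.1 hL).1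
  have h := (mem_Aset.1 hL).1
  rw [mem_Bset_cons] at h
  omega

lemma Aset_one (k : ℕ) (hk : 1 ≤ k) : Aset k 1 = {[(1, 1)]} := by
  ext L
  simp only [Set.mem_singleton_iff]
  constructor
  · intro hL
    obtain ⟨p, c, T, rfl⟩ := Bset_ne_nil (mem_Aset.1 hL).1
    have hc : c = 1 := (mem_Aset_cons.1 hL).2
    have h := (mem_Aset_cons.1 hL).1
    rw [mem_Bset_cons] at h
    have hp : p = 1 := by omega
    have hT : T = [] := by
      cases T with
      | nil => rfl
      | cons q T' =>
        have hq := h.2.2.1 q List.mem_cons_self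
        simp only [List.map_cons, List.sum_cons] at h
        omega
    subst hp hc hT; rfl
  · rintro rfl
    rw [mem_Aset_cons, mem_Bset_cons]
    exact ⟨⟨⟨le_refl 1, le_refl 1, hk⟩, odd_one, by simp, by simp⟩, rfl⟩

lemma key (k : ℕ) (hk : 1 ≤ k) :
    ∀ n, Finite ↥(Aset k n) ∧ Nat.card ↥(Aset k n) = aSeq k n := by
  intro n
  induction n using Nat.strong_induction_on with
  | _ n ih =>
    match n with
    | 0 =>
      rw [Aset_zero]
      exact ⟨Set.finite_empty.to_subtype, by simp [aSeq]⟩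
    | 1 =>
      rw [Aset_one k hk]
      refine ⟨(Set.finite_singleton _).to_subtype, ?_⟩
      rw [Nat.card_coe_set_eq, Set.ncard_singleton]
      rfl
    | (m + 2) =>
      obtain ⟨fin1, card1⟩ := ih (m + 1) (by omega)
      obtain ⟨fin0, card0⟩ := ih m (by omega)
      haveI := fin1; haveI := fin0
      have e1 : ↥(Bset k (m + 1)) ≃ Fin k × ↥(Aset k (m + 1)) :=
        (Equiv.ofBijective _ (f1_bij hk)).symm
      haveI finB : Finite ↥(Bset k (m + 1)) := Finite.of_equiv _ e1.symm
      have e2 : ↥(Aset k (m + 2)) ≃ ↥(Bset k (m + 1)) ⊕ ↥(Aset k m) :=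
        (Equiv.ofBijective _ (f2_bij hk)).symm
      haveI finA2 : Finite ↥(Aset k (m + 2)) := Finite.of_equiv _ e2.symm
      refine ⟨finA2, ?_⟩
      rw [Nat.card_congr e2, Nat.card_sum, Nat.card_congr e1, Nat.card_prod, Nat.card_eq_fintype_card (α := Fin k), Fintype.card_fin, card1, card0]
      rfl

theorem stmt15 (k : ℕ) (hk : 1 ≤ k) :
    (PowerSeries.mk fun n =>
        ((Nat.card {L : List (ℕ × ℕ) // L ∈ ColoredComp k n ∧ ∀ p ∈ L, Odd p.1} : ℕ) : ℚ)) *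
      (1 - PowerSeries.C (k : ℚ) * PowerSeries.X - PowerSeries.X ^ 2) = PowerSeries.X := by
  have hmk : (PowerSeries.mk fun n =>
        ((Nat.card {L : List (ℕ × ℕ) // L ∈ ColoredComp k n ∧ ∀ p ∈ L, Odd p.1} : ℕ) : ℚ)) =
      PowerSeries.mk fun n => ((aSeq k n : ℕ) : ℚ) := by
    apply congrArg
    funext n
    congr 1
    exact (key k hk n).2
  rw [hmk]
  set f := PowerSeries.mk fun n => ((aSeq k n : ℕ) : ℚ) with hf
  have expand : f * (1 - PowerSeries.C (k : ℚ) * PowerSeries.X - PowerSeries.X ^ 2) =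
      f - PowerSeries.C (k : ℚ) * (f * PowerSeries.X ^ 1) - f * PowerSeries.X ^ 2 := by
    ring
  rw [expand]
  ext n
  simp only [map_sub, PowerSeries.coeff_C_mul, PowerSeries.coeff_mul_X_pow',
    PowerSeries.coeff_X, PowerSeries.coeff_mk, hf]
  match n with
  | 0 => simp [aSeq]
  | 1 => simp [aSeq]
  | (m + 2) =>
    have h2 : aSeq k (m + 2) = k * aSeq k (m + 1) + aSeq k m := rfl
    have hle1 : (1 : ℕ) ≤ m + 2 := by omega
    have hle2 : (2 : ℕ) ≤ m + 2 := by omega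
    rw [if_pos hle1, if_pos hle2, if_neg (by omega : ¬ m + 2 = 1)]
    have e1 : m + 2 - 1 = m + 1 := by omega
    have e2 : m + 2 - 2 = m := by omega
    rw [e1, e2, h2]
    push_cast
    ring
end
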